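/- arXiv:2205.06889 — 13 statements merged into one kernel-verified Lean document; each statement's English description precedes it below -/
import Mathlib

section
/- If a connected simple graph G (finite or infinite) has metric dimension β(G) = k (i.e., G has a resolving set of cardinality k and no smaller one), then every vertex of G has degree at most 3^k − 1. -/
/-- `W` is a resolving set of `G`: every pair of distinct vertices is resolved
by some element of `W`, i.e. has different distance to it. -/
def IsResolving {V : Type*} (G : SimpleGraph V) (W : Set V) : Prop :=
  ∀ x y : V, x ≠ y → ∃ w ∈ W, G.dist w x ≠ G.dist w y

/-- If a connected graph `G` has metric dimension `k`, i.e. it has a resolving set of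
cardinality `k` and no resolving set of smaller cardinality, then every vertex of `G`
has degree at most `3 ^ k - 1`. -/
theorem degree_le_of_metricDim_eq {V : Type*} (G : SimpleGraph V) (hG : G.Connected)
    (k : ℕ) (W : Set V) (hW : IsResolving G W) (hWcard : W.encard = k)
    (hmin : ∀ W' : Set V, IsResolving G W' → (k : ℕ∞) ≤ W'.encard) :
    ∀ x : V, (G.neighborSet x).encard ≤ ((3 ^ k - 1 : ℕ) : ℕ∞) := by
  intro x
  have hWfin : W.Finite := Set.finite_of_encard_eq_coe hWcard
  haveI : Fintype W := hWfin.fintype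
  have hcard : Fintype.card W = k := by
    have := hWcard
    rw [Set.encard_eq_coe_toFinset_card] at this
    have h2 : W.toFinset.card = k := by exact_mod_cast this
    rwa [Set.toFinset_card] at h2
  -- the coding map
  set F : V → (W → Fin 3) := fun y w =>
    if G.dist w y < G.dist w x then 0 else if G.dist w y = G.dist w x then 1 else 2 with hF
  -- key: for neighbors of x, distances differ by at most 1
  have hkey : ∀ y ∈ G.neighborSet x, ∀ w : W,
      G.dist (w : V) x ≤ G.dist w y + 1 ∧ G.dist (w : V) y ≤ G.dist w x + 1 := by
    intro y hy w
    have hadj : G.Adj x y := hy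
    have h1 : G.dist x y = 1 := SimpleGraph.dist_eq_one_iff_adj.mpr hadj
    have h2 : G.dist y x = 1 := SimpleGraph.dist_eq_one_iff_adj.mpr hadj.symm
    constructor
    · have := hG.dist_triangle (u := (w : V)) (v := y) (w := x)
      omega
    · have := hG.dist_triangle (u := (w : V)) (v := x) (w := y)
      omega
  have hmaps : Set.MapsTo F (G.neighborSet x) {g : W → Fin 3 | g ≠ fun _ => 1} := by
    intro y hy
    have hadj : G.Adj x y := hy
    obtain ⟨w, hwW, hwne⟩ := hW x y hadj.ne
    simp only [Set.mem_setOf_eq]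
    intro hcon
    have := congrFun hcon ⟨w, hwW⟩
    simp only [hF] at this
    split_ifs at this with h1 h2
    · exact absurd this (by decide)
    · exact hwne h2.symm
    · exact absurd this (by decide)
  have hinj : Set.InjOn F (G.neighborSet x) := by
    intro y hy y' hy' hFeq
    by_contra hne
    obtain ⟨w, hwW, hwne⟩ := hW y y' hne
    have ha1 : G.dist w x ≤ G.dist w y + 1 := (hkey y hy ⟨w, hwW⟩).1
    have ha2 : G.dist w y ≤ G.dist w x + 1 := (hkey y hy ⟨w, hwW⟩).2
    have hb1 : G.dist w x ≤ G.dist w y' + 1 := (hkey y' hy' ⟨w, hwW⟩).1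
    have hb2 : G.dist w y' ≤ G.dist w x + 1 := (hkey y' hy' ⟨w, hwW⟩).2
    have hc1 : G.dist ((⟨w, hwW⟩ : W) : V) y = G.dist w y := rfl
    have hc2 : G.dist ((⟨w, hwW⟩ : W) : V) y' = G.dist w y' := rfl
    have hc3 : G.dist ((⟨w, hwW⟩ : W) : V) x = G.dist w x := rfl
    have := congrFun hFeq ⟨w, hwW⟩
    simp only [hF] at this
    apply hwne
    split_ifs at this with h1 h2 h3 h4 h3 h4 <;>
      first | (exact absurd this (by decide)) | omega
  have hle : (G.neighborSet x).encard ≤ ({g : W → Fin 3 | g ≠ fun _ => 1}).encard :=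
    Set.encard_le_encard_of_injOn hmaps hinj
  refine hle.trans ?_
  have : ({g : W → Fin 3 | g ≠ fun _ => 1}) = {(fun _ => 1 : W → Fin 3)}ᶜ := by
    ext g; simp
  rw [this]
  haveI : DecidableEq ↑W := Classical.decEq _
  have hfin : Fintype.card (W → Fin 3) = 3 ^ k := by
    simp [Fintype.card_fun, hcard]
  have huniv : (Set.univ : Set (W → Fin 3)).encard = (3 ^ k : ℕ) := by
    rw [Set.encard_univ, ENat.card_eq_coe_fintype_card, hfin]
  have hcompl : ({(fun _ => 1 : W → Fin 3)}ᶜ : Set (W → Fin 3)).encard + 1 = (3 ^ k : ℕ) := by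
    have := Set.encard_add_encard_compl ({(fun _ => 1 : W → Fin 3)} : Set (W → Fin 3))
    rw [Set.encard_singleton, huniv] at this
    rw [add_comm] at this
    exact this
  have h3 : (1 : ℕ) ≤ 3 ^ k := Nat.one_le_pow _ _ (by norm_num)
  have heq : (((3 ^ k - 1 : ℕ) : ℕ∞)) + 1 = ((3 ^ k : ℕ) : ℕ∞) := by
    norm_cast
    omega
  rw [← heq] at hcompl
  exact le_of_eq (WithTop.add_right_cancel WithTop.one_ne_top hcompl)
end

section
/- If a connected simple graph G (finite or infinite) has a finite resolving set, then G is locally finite, i.e., every vertex of G has finite degree. -/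
open SimpleGraph

lemma SimpleGraph.Adj.dist_le_dist_add_one {V : Type*} {G : SimpleGraph V} {u v : V}
    (h : G.Adj v u) (w : V) : G.dist w u ≤ G.dist w v + 1 :=
  dist_eq_one_iff_adj.mpr h ▸ h.reachable.dist_triangle_right w

namespace IsResolving

variable {V : Type*} {G : SimpleGraph V} {W : Set V}

lemma injective_dist (hW : IsResolving G W) : Function.Injective fun u (w : W) ↦ G.dist w u := by
  intro x y hxy
  by_contra hne
  obtain ⟨w, hw, hdist⟩ := hW x y hne
  exact hdist (congrFun hxy ⟨w, hw⟩)

lemma finite_of_bddAbove_dist (hW : IsResolving G W) (hWfin : W.Finite) {S : Set V}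
    (hS : ∀ w ∈ W, BddAbove (G.dist w '' S)) : S.Finite := by
  have := hWfin.to_subtype
  choose r hr using fun w : W ↦ hS w w.2
  have hbox : (Set.univ.pi fun w : W ↦ Set.Iic (r w)).Finite :=
    Set.Finite.pi fun w ↦ Set.finite_Iic _
  refine Set.Finite.of_finite_image (hbox.subset ?_) hW.injective_dist.injOn
  rintro _ ⟨u, hu, rfl⟩ w -
  exact hr w ⟨u, hu, rfl⟩

end IsResolving

theorem locallyFinite_of_finite_resolvingSet_general {V : Type*} (G : SimpleGraph V)
    (W : Set V) (hWfin : W.Finite) (hW : IsResolving G W) :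
    ∀ v : V, (G.neighborSet v).Finite := by
  intro v
  refine hW.finite_of_bddAbove_dist hWfin fun w _ ↦ ⟨G.dist w v + 1, ?_⟩
  rintro _ ⟨u, hu, rfl⟩
  exact Adj.dist_le_dist_add_one hu w

/-- If a connected graph `G` has a finite resolving set, then `G` is locally finite:
every vertex has finite degree (finitely many neighbors). -/
theorem locallyFinite_of_finite_resolvingSet {V : Type*} (G : SimpleGraph V)
    (hG : G.Connected) (W : Set V) (hWfin : W.Finite) (hW : IsResolving G W) :
    ∀ v : V, (G.neighborSet v).Finite :=
  locallyFinite_of_finite_resolvingSet_general G W hWfin hW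
end

section
/- For every integer i ≥ 1, the set W = {v_{ab} : a + b ≤ i} (which has cardinality 2i+1) is a resolving set of the graph G_i'; consequently the metric dimension of G_i' is at most 2i+1. -/
/-- The metric dimension of a graph, as an extended natural number: the least
cardinality of a resolving set. -/
noncomputable def metricDim {V : Type*} (G : SimpleGraph V) : ℕ∞ :=
  sInf (Set.encard '' {W : Set V | IsResolving G W})

/-- The graph `G_i'` on `ℕ × Fin 2`: vertices `(a,b)` and `(c,d)` are adjacent iff
they are distinct and either `|a - c| ≤ i`, or `|a - c| = i + 1` and `b ≠ d`. -/
def Gip (i : ℕ) : SimpleGraph (ℕ × Fin 2) where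
  Adj x y := x ≠ y ∧ (Nat.dist x.1 y.1 ≤ i ∨ (Nat.dist x.1 y.1 = i + 1 ∧ x.2 ≠ y.2))
  symm := ⟨by
    rintro x y ⟨h1, h2⟩
    refine ⟨h1.symm, ?_⟩
    rw [Nat.dist_comm]
    rcases h2 with h | ⟨h, hne⟩
    · exact Or.inl h
    · exact Or.inr ⟨h, hne.symm⟩⟩
  loopless := ⟨fun x h => h.1 rfl⟩

lemma fin2_flip_ne (a : Fin 2) : a ≠ 1 - a := by fin_cases a <;> decide

lemma fin2_flip_iff (a c : Fin 2) : (1 - a = c) ↔ ¬ (a = c) := by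
  fin_cases a <;> fin_cases c <;> decide

lemma fin2_ne_iff (a b c : Fin 2) (h : a ≠ b) : (b = c) ↔ ¬ (a = c) := by
  fin_cases a <;> fin_cases b <;> fin_cases c <;> simp_all

/-- Upper bound walk construction. -/
lemma gip_walk (i : ℕ) : ∀ k : ℕ, ∀ u v : ℕ × Fin 2,
    (Nat.dist u.1 v.1 < k * (i+1) ∨
      (Nat.dist u.1 v.1 = k * (i+1) ∧ (u.2 = v.2 ↔ Even k))) →
    ∃ p : (Gip i).Walk u v, p.length ≤ k := by
  intro k
  induction k with
  | zero =>
    intro u v h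
    simp only [Nat.zero_mul] at h
    rcases h with h | ⟨h1, h2⟩
    · omega
    · have h3 : u.1 = v.1 := Nat.eq_of_dist_eq_zero h1
      have h4 : u.2 = v.2 := h2.mpr (Even.zero)
      have : u = v := Prod.ext h3 h4
      subst this
      exact ⟨SimpleGraph.Walk.nil, by simp⟩
  | succ k ih =>
    intro u v h
    by_cases hm : Nat.dist u.1 v.1 ≤ i
    · -- one step (or zero) suffices
      by_cases huv : u = v
      · subst huv; exact ⟨SimpleGraph.Walk.nil, by simp⟩
      · have adj : (Gip i).Adj u v := ⟨huv, Or.inl hm⟩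
        exact ⟨adj.toWalk, by simp⟩
    · push_neg at hm
      -- step of size i+1 flipping the bit, towards v
      have hne : u.1 ≠ v.1 := by
        intro he; rw [he, Nat.dist_self] at hm; omega
      set a := u.1 with ha
      set c := v.1 with hc
      have hd : Nat.dist a c = a - c + (c - a) := rfl
      set a' : ℕ := if a < c then a + (i+1) else a - (i+1) with ha'
      set u' : ℕ × Fin 2 := (a', 1 - u.2) with hu'
      have hdist1 : Nat.dist a a' = i + 1 := by
        have : Nat.dist a a' = a - a' + (a' - a) := rfl
        rw [this]
        rcases lt_or_gt_of_ne hne with hlt | hgt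
        · simp only [ha', if_pos hlt]; omega
        · have : i + 1 ≤ a - c := by omega
          simp only [ha', if_neg (by omega : ¬ a < c)]; omega
      have hdist2 : Nat.dist a' c = Nat.dist a c - (i+1) := by
        have h1 : Nat.dist a' c = a' - c + (c - a') := rfl
        rw [h1, hd]
        rcases lt_or_gt_of_ne hne with hlt | hgt
        · have : i + 1 ≤ c - a := by omega
          simp only [ha', if_pos hlt]; omega
        · have : i + 1 ≤ a - c := by omega
          simp only [ha', if_neg (by omega : ¬ a < c)]; omega
      have adj : (Gip i).Adj u u' := by
        refine ⟨?_, Or.inr ⟨hdist1, fin2_flip_ne u.2⟩⟩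
        intro he
        have h0 : a = a' := congrArg Prod.fst he
        rw [← h0, Nat.dist_self] at hdist1
        omega
      have hring : (k+1) * (i+1) = k * (i+1) + (i+1) := by ring
      have hcond : Nat.dist u'.1 v.1 < k * (i+1) ∨
          (Nat.dist u'.1 v.1 = k * (i+1) ∧ (u'.2 = v.2 ↔ Even k)) := by
        have hu'1 : u'.1 = a' := rfl
        rw [hu'1, hdist2]
        rcases h with h | ⟨h1, h2⟩
        · left; omega
        · right
          constructor
          · omega
          · have : (u'.2 = v.2) ↔ ¬ (u.2 = v.2) := fin2_flip_iff u.2 v.2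
            rw [this, h2, Nat.even_add_one, not_not]
      obtain ⟨p, hp⟩ := ih u' v hcond
      exact ⟨SimpleGraph.Walk.cons adj p, by simp; omega⟩

/-- Lower bound: properties of any walk. -/
lemma gip_walk_lb (i : ℕ) {u v : ℕ × Fin 2} (p : (Gip i).Walk u v) :
    Nat.dist u.1 v.1 ≤ p.length * (i+1) ∧
    (Nat.dist u.1 v.1 = p.length * (i+1) → (u.2 = v.2 ↔ Even p.length)) := by
  induction p with
  | nil => simp [Nat.dist_self]
  | @cons u u' v h p ih =>
    have htri : Nat.dist u.1 v.1 ≤ Nat.dist u.1 u'.1 + Nat.dist u'.1 v.1 :=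
      Nat.dist.triangle_inequality _ _ _
    have hstep : Nat.dist u.1 u'.1 ≤ i + 1 := by
      rcases h.2 with h' | ⟨h', _⟩ <;> omega
    have hlen : (SimpleGraph.Walk.cons h p).length = p.length + 1 := by simp
    rw [hlen]
    have hring : (p.length + 1) * (i+1) = p.length * (i+1) + (i+1) := by ring
    constructor
    · calc Nat.dist u.1 v.1 ≤ Nat.dist u.1 u'.1 + Nat.dist u'.1 v.1 := htri
        _ ≤ (i+1) + p.length * (i+1) := by exact Nat.add_le_add hstep ih.1
        _ = (p.length + 1) * (i+1) := by ring
    · intro heq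
      have h1 : Nat.dist u'.1 v.1 ≤ p.length * (i+1) := ih.1
      have h2 : Nat.dist u.1 u'.1 = i + 1 := by omega
      have h3 : Nat.dist u'.1 v.1 = p.length * (i+1) := by omega
      have h4 := ih.2 h3
      have h5 : u.2 ≠ u'.2 := by
        rcases h.2 with h' | ⟨_, h''⟩
        · omega
        · exact h''
      rw [Nat.even_add_one, ← h4]
      exact fin2_ne_iff u'.2 u.2 v.2 (Ne.symm h5)

lemma gip_reachable (i : ℕ) (u v : ℕ × Fin 2) : (Gip i).Reachable u v := by
  have hlt : Nat.dist u.1 v.1 < (Nat.dist u.1 v.1 + 1) * (i+1) :=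
    Nat.lt_of_lt_of_le (Nat.lt_succ_self _) (Nat.le_mul_of_pos_right _ (by omega))
  obtain ⟨p, _⟩ := gip_walk i (Nat.dist u.1 v.1 + 1) u v (Or.inl hlt)
  exact ⟨p⟩

lemma gip_dist_spec (i : ℕ) (u v : ℕ × Fin 2) :
    Nat.dist u.1 v.1 ≤ (Gip i).dist u v * (i+1) ∧
    (Nat.dist u.1 v.1 = (Gip i).dist u v * (i+1) →
      (u.2 = v.2 ↔ Even ((Gip i).dist u v))) := by
  obtain ⟨p, hp⟩ := (gip_reachable i u v).exists_walk_length_eq_dist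
  have h := gip_walk_lb i p
  rw [hp] at h
  exact h

lemma gip_dist_le (i k : ℕ) (u v : ℕ × Fin 2)
    (h : Nat.dist u.1 v.1 < k * (i+1) ∨
      (Nat.dist u.1 v.1 = k * (i+1) ∧ (u.2 = v.2 ↔ Even k))) :
    (Gip i).dist u v ≤ k := by
  obtain ⟨p, hp⟩ := gip_walk i k u v h
  exact le_trans (SimpleGraph.dist_le p) hp

lemma gip_dist_ge (i k : ℕ) (u v : ℕ × Fin 2) (h : k * (i+1) ≤ Nat.dist u.1 v.1) :
    k ≤ (Gip i).dist u v := by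
  have h1 := (gip_dist_spec i u v).1
  exact Nat.le_of_mul_le_mul_right (le_trans h h1) (by omega)

/-- exact distance when `m = k(i+1)` and parity matches -/
lemma gip_dist_match (i k : ℕ) (u v : ℕ × Fin 2)
    (hm : Nat.dist u.1 v.1 = k * (i+1)) (hp : u.2 = v.2 ↔ Even k) :
    (Gip i).dist u v = k :=
  le_antisymm (gip_dist_le i k u v (Or.inr ⟨hm, hp⟩)) (gip_dist_ge i k u v (le_of_eq hm.symm))

/-- exact distance when `m = k(i+1)`, `k ≥ 1`, and parity mismatches -/
lemma gip_dist_mismatch (i k : ℕ) (u v : ℕ × Fin 2)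
    (hm : Nat.dist u.1 v.1 = k * (i+1)) (hp : ¬ (u.2 = v.2 ↔ Even k)) :
    (Gip i).dist u v = k + 1 := by
  have hge : k ≤ (Gip i).dist u v := gip_dist_ge i k u v (le_of_eq hm.symm)
  have hne : (Gip i).dist u v ≠ k := by
    intro he
    exact hp (by rw [← he]; exact (gip_dist_spec i u v).2 (by rw [hm, he]))
  have hle : (Gip i).dist u v ≤ k + 1 := by
    apply gip_dist_le i (k+1) u v
    left
    have : (k+1) * (i+1) = k * (i+1) + (i+1) := by ring
    omega
  omega

/-- exact distance when `k(i+1) < m < (k+1)(i+1)` -/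
lemma gip_dist_between (i k : ℕ) (u v : ℕ × Fin 2)
    (h1 : k * (i+1) < Nat.dist u.1 v.1) (h2 : Nat.dist u.1 v.1 < (k+1) * (i+1)) :
    (Gip i).dist u v = k + 1 := by
  have hle : (Gip i).dist u v ≤ k + 1 := gip_dist_le i (k+1) u v (Or.inl h2)
  have hge : k + 1 ≤ (Gip i).dist u v := by
    have hs := (gip_dist_spec i u v).1
    by_contra hc
    push_neg at hc
    have hd : (Gip i).dist u v ≤ k := by omega
    have : (Gip i).dist u v * (i+1) ≤ k * (i+1) := Nat.mul_le_mul_right _ hd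
    omega
  omega

lemma gip_dist_eq_zero_iff (i : ℕ) (u v : ℕ × Fin 2) :
    (Gip i).dist u v = 0 ↔ u = v :=
  (gip_reachable i u v).dist_eq_zero_iff

lemma fin2_opp (b d : Fin 2) (h : b ≠ d) (c : Fin 2) : (c = b) ↔ ¬ (c = d) := by
  fin_cases b <;> fin_cases d <;> fin_cases c <;> simp_all

/-- key lemma: distinguishing two vertices with different first coordinates -/
lemma gip_key (i : ℕ) (hi : 1 ≤ i) (x y : ℕ × Fin 2) (hlt : x.1 < y.1) :
    ∃ w ∈ {p : ℕ × Fin 2 | p.1 + (p.2 : ℕ) ≤ i},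
      (Gip i).dist w x ≠ (Gip i).dist w y := by
  obtain ⟨a, b⟩ := x
  obtain ⟨c, d⟩ := y
  simp only at hlt
  by_cases hc : c ≤ i
  · -- w = x itself
    refine ⟨(a, b), ?_, ?_⟩
    · have : (b : ℕ) ≤ 1 := Fin.is_le b
      simp only [Set.mem_setOf_eq]
      omega
    · have h0 : (Gip i).dist (a, b) (a, b) = 0 := SimpleGraph.dist_self
      have hne : (a, b) ≠ (c, d) := by
        intro he
        exact absurd (congrArg Prod.fst he) (by simp; omega)
      have h1 : (Gip i).dist (a, b) (c, d) ≠ 0 :=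
        fun h => hne ((gip_dist_eq_zero_iff i _ _).mp h)
      omega
  · push_neg at hc
    set k := c / (i+1) with hkdef
    set j := c % (i+1) with hjdef
    have hcj : (i+1) * k + j = c := Nat.div_add_mod c (i+1)
    have hj : j < i + 1 := Nat.mod_lt _ (by omega)
    have hk : 1 ≤ k := by
      rw [hkdef]
      rw [Nat.le_div_iff_mul_le (by omega)]
      omega
    have hmul : (i+1) * k = k * (i+1) := by ring
    have hkk : i + 1 ≤ k * (i+1) := Nat.le_mul_of_pos_left (i+1) hk
    by_cases hji : j < i
    · -- use w = (j, e) with e chosen mismatching d's parity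
      set e : Fin 2 := if Even k then 1 - d else d with he
      have hmy : Nat.dist j c = k * (i+1) := by
        have hd : Nat.dist j c = j - c + (c - j) := rfl
        omega
      have hmx : Nat.dist j a < k * (i+1) := by
        have hd : Nat.dist j a = j - a + (a - j) := rfl
        omega
      have hmis : ¬ (e = d ↔ Even k) := by
        rw [he]
        by_cases hev : Even k
        · rw [if_pos hev]
          intro hh
          exact (Ne.symm (fin2_flip_ne d)) (hh.mpr hev)
        · rw [if_neg hev]
          intro hh
          exact hev (hh.mp rfl)
      refine ⟨(j, e), ?_, ?_⟩
      · have : (e : ℕ) ≤ 1 := Fin.is_le e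
        simp only [Set.mem_setOf_eq]
        omega
      · have hdy : (Gip i).dist (j, e) (c, d) = k + 1 :=
          gip_dist_mismatch i k (j, e) (c, d) hmy hmis
        have hdx : (Gip i).dist (j, e) (a, b) ≤ k :=
          gip_dist_le i k (j, e) (a, b) (Or.inl hmx)
        omega
    · -- j = i; use w = (i-1, e)
      have hjeq : j = i := by omega
      have hmy : Nat.dist (i-1) c = k * (i+1) + 1 := by
        have hd : Nat.dist (i-1) c = (i-1) - c + (c - (i-1)) := rfl
        omega
      have hdyk : ∀ e : Fin 2, (Gip i).dist (i-1, e) (c, d) = k + 1 := by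
        intro e
        apply gip_dist_between i k (i-1, e) (c, d)
        · show k * (i+1) < Nat.dist (i-1) c
          omega
        · show Nat.dist (i-1) c < (k+1) * (i+1)
          have : (k+1) * (i+1) = k * (i+1) + (i+1) := by ring
          omega
      have hmxle : Nat.dist (i-1) a ≤ k * (i+1) := by
        have hd : Nat.dist (i-1) a = (i-1) - a + (a - (i-1)) := rfl
        omega
      by_cases hstrict : Nat.dist (i-1) a < k * (i+1)
      · refine ⟨(i-1, 0), by simp only [Set.mem_setOf_eq]; omega, ?_⟩
        have hdx : (Gip i).dist (i-1, (0 : Fin 2)) (a, b) ≤ k :=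
          gip_dist_le i k _ _ (Or.inl hstrict)
        rw [hdyk 0]
        omega
      · have hmx : Nat.dist (i-1) a = k * (i+1) := by omega
        set e : Fin 2 := if Even k then b else 1 - b with he
        have hmatch : (e = b ↔ Even k) := by
          rw [he]
          by_cases hev : Even k
          · rw [if_pos hev]
            exact ⟨fun _ => hev, fun _ => rfl⟩
          · rw [if_neg hev]
            exact iff_of_false (Ne.symm (fin2_flip_ne b)) hev
        refine ⟨(i-1, e), ?_, ?_⟩
        · have : (e : ℕ) ≤ 1 := Fin.is_le e
          simp only [Set.mem_setOf_eq]
          omega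
        · have hdx : (Gip i).dist (i-1, e) (a, b) = k :=
            gip_dist_match i k (i-1, e) (a, b) hmx hmatch
          rw [hdx, hdyk e]
          omega

lemma fin2_zero_or_one : ∀ b : Fin 2, b = 0 ∨ b = 1 := by decide

lemma gip_dist_match' (i k t a : ℕ) (e b : Fin 2)
    (hm : Nat.dist t a = k * (i+1)) (hp : e = b ↔ Even k) :
    (Gip i).dist (t, e) (a, b) = k :=
  gip_dist_match i k (t, e) (a, b) hm hp

lemma gip_dist_mismatch' (i k t a : ℕ) (e b : Fin 2)
    (hm : Nat.dist t a = k * (i+1)) (hp : ¬ (e = b ↔ Even k)) :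
    (Gip i).dist (t, e) (a, b) = k + 1 :=
  gip_dist_mismatch i k (t, e) (a, b) hm hp

lemma gip_resolving (i : ℕ) (hi : 1 ≤ i) :
    IsResolving (Gip i) {p : ℕ × Fin 2 | p.1 + (p.2 : ℕ) ≤ i} := by
  intro x y hxy
  rcases lt_trichotomy x.1 y.1 with hlt | heq | hgt
  · exact gip_key i hi x y hlt
  · -- equal first coordinates, different second
    obtain ⟨a, b⟩ := x
    obtain ⟨c, d⟩ := y
    simp only at heq
    subst heq
    have hbd : b ≠ d := by
      intro hh
      exact hxy (by rw [hh])
    set k := a / (i+1) with hkdef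
    set j := a % (i+1) with hjdef
    have hcj : (i+1) * k + j = a := Nat.div_add_mod a (i+1)
    have hj : j < i + 1 := Nat.mod_lt _ (by omega)
    have hmul : (i+1) * k = k * (i+1) := by ring
    by_cases hk0 : k = 0
    · -- a = j ≤ i, one of x,y is (a,0) ∈ W
      have haj : a ≤ i := by
        have h' := hcj
        rw [hk0, Nat.mul_zero] at h'
        omega
      refine ⟨(a, 0), by simp only [Set.mem_setOf_eq, Fin.val_zero, add_zero]; omega, ?_⟩
      have h0 : (Gip i).dist (a, (0:Fin 2)) (a, (0:Fin 2)) = 0 := SimpleGraph.dist_self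
      rcases fin2_zero_or_one b with hb | hb
      · subst hb
        have hd1 : d = 1 := by
          rcases fin2_zero_or_one d with h | h
          · exact absurd h.symm hbd
          · exact h
        subst hd1
        have hne : ((a, (0:Fin 2)) : ℕ × Fin 2) ≠ (a, 1) := by
          intro hh
          exact (by decide : (0 : Fin 2) ≠ 1) (congrArg Prod.snd hh)
        have h1 : (Gip i).dist (a, (0:Fin 2)) (a, 1) ≠ 0 :=
          fun h => hne ((gip_dist_eq_zero_iff i _ _).mp h)
        omega
      · subst hb
        have hd0 : d = 0 := by
          rcases fin2_zero_or_one d with h | h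
          · exact h
          · exact absurd h.symm hbd
        subst hd0
        have hne : ((a, (0:Fin 2)) : ℕ × Fin 2) ≠ (a, 1) := by
          intro hh
          exact (by decide : (0 : Fin 2) ≠ 1) (congrArg Prod.snd hh)
        have h1 : (Gip i).dist (a, (0:Fin 2)) (a, 1) ≠ 0 :=
          fun h => hne ((gip_dist_eq_zero_iff i _ _).mp h)
        omega
    · -- k ≥ 1 : use w = (j, 0)
      have hm : Nat.dist j a = k * (i+1) := by
        have hd : Nat.dist j a = j - a + (a - j) := rfl
        omega
      refine ⟨(j, 0), by simp only [Set.mem_setOf_eq, Fin.val_zero, add_zero]; omega, ?_⟩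
      have key : ∀ b' d' : Fin 2, b' = 0 → d' = 1 →
          (Gip i).dist (j, 0) (a, b') ≠ (Gip i).dist (j, 0) (a, d') := by
        intro b' d' hb' hd'
        subst hb'; subst hd'
        by_cases hev : Even k
        · have hdx : (Gip i).dist (j, 0) (a, 0) = k :=
            gip_dist_match' i k j a 0 0 hm (iff_of_true rfl hev)
          have hdy : (Gip i).dist (j, 0) (a, 1) = k + 1 := by
            apply gip_dist_mismatch' i k j a 0 1 hm
            intro hh
            exact (by decide : (0 : Fin 2) ≠ 1) (hh.mpr hev)
          omega
        · have hdx : (Gip i).dist (j, 0) (a, 0) = k + 1 := by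
            apply gip_dist_mismatch i k (j, (0:Fin 2)) (a, (0:Fin 2)) hm
            intro hh
            exact hev (hh.mp rfl)
          have hdy : (Gip i).dist (j, 0) (a, 1) = k :=
            gip_dist_match' i k j a 0 1 hm (iff_of_false (by decide) hev)
          omega
      rcases fin2_zero_or_one b with hb | hb
      · have hd1 : d = 1 := by
          rcases fin2_zero_or_one d with h | h
          · rw [hb] at hbd; exact absurd h.symm (Ne.symm hbd).symm
          · exact h
        exact key b d hb hd1
      · have hd0 : d = 0 := by
          rcases fin2_zero_or_one d with h | h
          · exact h
          · rw [hb] at hbd; exact absurd h.symm (Ne.symm hbd).symm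
        exact (key d b hd0 hb).symm
  · obtain ⟨w, hw, hne⟩ := gip_key i hi y x hgt
    exact ⟨w, hw, hne.symm⟩

lemma gip_card (i : ℕ) (hi : 1 ≤ i) :
    ({p : ℕ × Fin 2 | p.1 + (p.2 : ℕ) ≤ i}).encard = 2 * i + 1 := by
  classical
  set F : Finset (ℕ × Fin 2) :=
    ((Finset.range (i+1)).image (fun a => (a, (0 : Fin 2)))) ∪
    ((Finset.range i).image (fun a => (a, (1 : Fin 2)))) with hF
  have hSF : {p : ℕ × Fin 2 | p.1 + (p.2 : ℕ) ≤ i} = ↑F := by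
    ext ⟨a, e⟩
    simp only [Set.mem_setOf_eq, hF, Finset.coe_union, Set.mem_union, Finset.coe_image,
      Set.mem_image, Finset.mem_coe, Finset.mem_range, Prod.mk.injEq]
    rcases fin2_zero_or_one e with he | he <;> subst he
    · simp only [Fin.val_zero, add_zero]
      constructor
      · intro h
        exact Or.inl ⟨a, by omega, rfl, trivial⟩
      · rintro (⟨a', ha', rfl, -⟩ | ⟨a', ha', rfl, he⟩)
        · omega
        · exact absurd he (by decide)
    · simp only [Fin.val_one]
      constructor
      · intro h
        exact Or.inr ⟨a, by omega, rfl, trivial⟩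
      · rintro (⟨a', ha', rfl, he⟩ | ⟨a', ha', rfl, -⟩)
        · exact absurd he (by decide)
        · omega
  have hinj0 : Function.Injective (fun a : ℕ => (a, (0 : Fin 2))) := by
    intro a a' h
    exact congrArg Prod.fst h
  have hinj1 : Function.Injective (fun a : ℕ => (a, (1 : Fin 2))) := by
    intro a a' h
    exact congrArg Prod.fst h
  have hdisj : Disjoint ((Finset.range (i+1)).image (fun a => (a, (0 : Fin 2))))
      ((Finset.range i).image (fun a => (a, (1 : Fin 2)))) := by
    rw [Finset.disjoint_left]
    rintro ⟨a, e⟩ h0 h1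
    simp only [Finset.mem_image, Finset.mem_range, Prod.mk.injEq] at h0 h1
    obtain ⟨-, -, -, he0⟩ := h0
    obtain ⟨-, -, -, he1⟩ := h1
    rw [← he0] at he1
    exact absurd he1 (by decide)
  have hcard : F.card = 2 * i + 1 := by
    rw [hF, Finset.card_union_of_disjoint hdisj,
      Finset.card_image_of_injective _ hinj0, Finset.card_image_of_injective _ hinj1,
      Finset.card_range, Finset.card_range]
    omega
  rw [hSF, Set.encard_coe_eq_coe_finsetCard, hcard]
  push_cast
  ring

/-- For every `i ≥ 1`, the set `W = {v_{ab} : a + b ≤ i}` is a resolving set of `G_i'`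
of cardinality `2 i + 1`; consequently the metric dimension of `G_i'` is at most `2 i + 1`. -/
theorem Gip_resolvingSet (i : ℕ) (hi : 1 ≤ i) :
    IsResolving (Gip i) {p : ℕ × Fin 2 | p.1 + (p.2 : ℕ) ≤ i} ∧
    ({p : ℕ × Fin 2 | p.1 + (p.2 : ℕ) ≤ i}).encard = 2 * i + 1 ∧
    metricDim (Gip i) ≤ 2 * i + 1 := by
  refine ⟨gip_resolving i hi, gip_card i hi, ?_⟩
  have hmem : (2 * (i : ℕ∞) + 1) ∈ Set.encard '' {W : Set (ℕ × Fin 2) | IsResolving (Gip i) W} :=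
    ⟨{p : ℕ × Fin 2 | p.1 + (p.2 : ℕ) ≤ i}, gip_resolving i hi, gip_card i hi⟩
  exact sInf_le hmem
end

section
/- For every integer i ≥ 1 and all vertices v_{ab}, v_{cd} of the graph G_i': if b = d then the distance between v_{ab} and v_{cd} in G_i' equals α_i(|a−c|), and if b ≠ d then this distance equals β_i(|a−c|). -/
/-- `α_i(k) = ⌈k/(i+1)⌉ + 1` if `(i+1) ∣ k` and `k/(i+1)` is odd, and
`α_i(k) = ⌈k/(i+1)⌉` otherwise.  (Here `(k + i) / (i + 1) = ⌈k/(i+1)⌉`.) -/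
def alph (i k : ℕ) : ℕ :=
  if (i + 1) ∣ k ∧ Odd (k / (i + 1)) then (k + i) / (i + 1) + 1 else (k + i) / (i + 1)

/-- `β_i(k) = ⌈k/(i+1)⌉ + 1` if `(i+1) ∣ k` and `k/(i+1)` is even, and
`β_i(k) = ⌈k/(i+1)⌉` otherwise. -/
def bet (i k : ℕ) : ℕ :=
  if (i + 1) ∣ k ∧ Even (k / (i + 1)) then (k + i) / (i + 1) + 1 else (k + i) / (i + 1)

/-- Lower bound data extracted from any walk. -/
lemma Gip_walk_bound (i : ℕ) {x y : ℕ × Fin 2} (W : (Gip i).Walk x y) :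
    ∃ f, f ≤ W.length ∧ (f % 2 = if x.2 = y.2 then 0 else 1) ∧
      Nat.dist x.1 y.1 ≤ W.length * i + f := by
  induction W with
  | nil => exact ⟨0, le_refl 0, by simp, by simp [Nat.dist_self]⟩
  | @cons x u y h W ih =>
    obtain ⟨f, hf, hpar, hd⟩ := ih
    have hedge : Nat.dist x.1 u.1 ≤ i + (if x.2 = u.2 then 0 else 1) := by
      rcases h.2 with h2 | ⟨h2, hne⟩
      · omega
      · simp [if_neg hne]; omega
    have htri := Nat.dist.triangle_inequality x.1 u.1 y.1
    have hmul : (W.length + 1) * i = W.length * i + i := by ring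
    refine ⟨f + (if x.2 = u.2 then 0 else 1), ?_, ?_, ?_⟩
    · simp only [SimpleGraph.Walk.length_cons]; split <;> omega
    · have fin2 : ∀ p q r : Fin 2, p ≠ q → q ≠ r → p = r := by decide
      by_cases h1 : x.2 = u.2 <;> by_cases h2 : u.2 = y.2
      · simp only [if_pos h1, if_pos (h1.trans h2)]; simpa [if_pos h2] using hpar
      · have : ¬ (x.2 = y.2) := fun hxy => h2 (h1.symm.trans hxy)
        simp only [if_pos h1, if_neg this]; simpa [if_neg h2] using hpar
      · have : ¬ (x.2 = y.2) := fun hxy => h1 (hxy.trans h2.symm)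
        simp only [if_neg h1, if_neg this]
        simp only [if_pos h2] at hpar; omega
      · have : x.2 = y.2 := fin2 _ _ _ h1 h2
        simp only [if_neg h1, if_pos this]
        simp only [if_neg h2] at hpar; omega
    · simp only [SimpleGraph.Walk.length_cons, hmul]
      split at hedge <;> [skip; skip] <;> split <;> omega

/-- Construct a walk of bounded length. -/
lemma Gip_walk_ub (i : ℕ) (hi : 1 ≤ i) :
    ∀ n a c (b d : Fin 2), (∃ f, f ≤ n ∧ f % 2 = (if b = d then 0 else 1) ∧
      Nat.dist a c ≤ n * i + f) →
    ∃ W : (Gip i).Walk (a, b) (c, d), W.length ≤ n := by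
  intro n
  induction n with
  | zero =>
    rintro a c b d ⟨f, hf, hpar, hd⟩
    have hf0 : f = 0 := by omega
    subst hf0
    have hbd : b = d := by by_contra hne; simp [if_neg hne] at hpar
    have hac : a = c := by
      simp only [Nat.dist] at hd; omega
    subst hbd; subst hac
    exact ⟨SimpleGraph.Walk.nil, le_refl 0⟩
  | succ n ih =>
    rintro a c b d ⟨f, hf, hpar, hd⟩
    by_cases htriv : a = c ∧ b = d
    · obtain ⟨h1, h2⟩ := htriv; subst h1; subst h2
      exact ⟨SimpleGraph.Walk.nil, by simp⟩
    -- helper : intermediate point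
    have step : ∀ cap : ℕ, ∃ a' s, Nat.dist a a' = s ∧
        Nat.dist a' c = Nat.dist a c - s ∧ s ≤ cap ∧ (s = cap ∨ s = Nat.dist a c) := by
      intro cap
      have hmin : min (Nat.dist a c) cap ≤ cap ∧
          (min (Nat.dist a c) cap = cap ∨ min (Nat.dist a c) cap = Nat.dist a c) := by
        rcases le_total (Nat.dist a c) cap with h | h
        · exact ⟨le_trans (min_le_left _ _) h, Or.inr (min_eq_left h)⟩
        · exact ⟨min_le_right _ _, Or.inl (min_eq_right h)⟩
      rcases le_total a c with hle | hle
      · refine ⟨a + min (Nat.dist a c) cap, min (Nat.dist a c) cap, ?_, ?_, hmin.1, hmin.2⟩ <;>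
        · have h1 := min_le_left (Nat.dist a c) cap
          simp only [Nat.dist] at *; omega
      · refine ⟨a - min (Nat.dist a c) cap, min (Nat.dist a c) cap, ?_, ?_, hmin.1, hmin.2⟩ <;>
        · have h1 := min_le_left (Nat.dist a c) cap
          simp only [Nat.dist] at *; omega
    have hmul : (n + 1) * i = n * i + i := by ring
    rcases Nat.eq_zero_or_pos f with hf0 | hfpos
    · -- f = 0 : b = d, non-flip step of length min k i ≥ 1
      subst hf0
      have hbd : b = d := by by_contra hne; simp [if_neg hne] at hpar
      subst hbd
      have hk : Nat.dist a c ≠ 0 := by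
        intro h0
        exact htriv ⟨Nat.eq_of_dist_eq_zero h0, rfl⟩
      obtain ⟨a', s, ha1, ha2, hs1, hs2⟩ := step i
      have hadj : (Gip i).Adj (a, b) (a', b) := by
        refine ⟨?_, Or.inl ?_⟩
        · intro hxy
          have : a = a' := congrArg Prod.fst hxy
          subst this
          rw [Nat.dist_self] at ha1
          omega
        · show Nat.dist a a' ≤ i; omega
      obtain ⟨W, hW⟩ := ih a' c b b ⟨0, by omega, by simp, by omega⟩
      exact ⟨SimpleGraph.Walk.cons hadj W, by simpa using Nat.succ_le_succ hW⟩
    · -- f ≥ 1 : flip step of length min k (i+1)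
      obtain ⟨a', s, ha1, ha2, hs1, hs2⟩ := step (i + 1)
      have hflipne' : ∀ p : Fin 2, p + 1 ≠ p := by decide
      have hflipne : b + 1 ≠ b := hflipne' b
      have hadj : (Gip i).Adj (a, b) (a', b + 1) := by
        refine ⟨?_, ?_⟩
        · intro hxy
          exact hflipne.symm (congrArg Prod.snd hxy)
        · show Nat.dist a a' ≤ i ∨ (Nat.dist a a' = i + 1 ∧ (b:Fin 2) ≠ b + 1)
          rcases Nat.lt_or_ge (Nat.dist a a') (i + 1) with hlt | hge
          · exact Or.inl (by omega)
          · exact Or.inr ⟨by omega, hflipne.symm⟩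
      have hiff : ∀ p q : Fin 2, (p + 1 = q) ↔ ¬ (p = q) := by decide
      have hpar' : (f - 1) % 2 = if b + 1 = d then 0 else 1 := by
        by_cases hbd : b = d
        · simp only [if_neg ((hiff b d).not.mpr (by simpa using hbd))]
          simp [if_pos hbd] at hpar; omega
        · simp only [if_pos ((hiff b d).mpr hbd)]
          simp [if_neg hbd] at hpar; omega
      obtain ⟨W, hW⟩ := ih a' c (b + 1) d ⟨f - 1, by omega, hpar', by omega⟩
      exact ⟨SimpleGraph.Walk.cons hadj W, by simpa using Nat.succ_le_succ hW⟩


/-- For `i ≥ 1`, the distance in `G_i'` between `(a,b)` and `(c,d)` equals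
`α_i(|a-c|)` when `b = d`, and equals `β_i(|a-c|)` when `b ≠ d`. -/
theorem Gip_dist_eq (i : ℕ) (hi : 1 ≤ i) (a c : ℕ) (b d : Fin 2) :
    (b = d → (Gip i).dist (a, b) (c, d) = alph i (Nat.dist a c)) ∧
    (b ≠ d → (Gip i).dist (a, b) (c, d) = bet i (Nat.dist a c)) := by
  set k := Nat.dist a c with hk
  have hdm := Nat.div_add_mod (k + i) (i + 1)
  rw [Nat.mul_comm] at hdm
  have hmod := Nat.mod_lt (k + i) (show 0 < i + 1 by omega)
  have hq1 : (k + i) / (i + 1) * (i + 1) ≤ k + i := by omega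
  have hq2 : k ≤ (k + i) / (i + 1) * (i + 1) := by omega
  set q := (k + i) / (i + 1) with hq
  have hqm : q * (i + 1) = q * i + q := by ring
  have hdvd_q : (i + 1) ∣ k → k / (i + 1) = q := by
    rintro ⟨s, hs⟩
    have h1 : k / (i+1) = s := by rw [hs, Nat.mul_div_cancel_left _ (by omega : 0 < i + 1)]
    have h2 : (k + i) / (i + 1) = s := by
      rw [hs, Nat.mul_add_div (by omega : 0 < i + 1), Nat.div_eq_of_lt (by omega)]
      omega
    omega
  have hndvd : ¬ (i + 1) ∣ k → k < q * (i + 1) := by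
    intro h
    rcases Nat.lt_or_ge k (q * (i+1)) with h' | h'
    · exact h'
    · exact absurd ⟨q, by rw [Nat.mul_comm]; omega⟩ h
  -- general lower-bound arithmetic
  have lower : ∀ n f : ℕ, f ≤ n → k ≤ n * i + f → q ≤ n := by
    intro n f hf hkn
    have h1 : k + i ≤ i + n * (i + 1) := by
      have : n * (i + 1) = n * i + n := by ring
      omega
    calc q ≤ (i + n * (i + 1)) / (i + 1) := Nat.div_le_div_right h1
      _ = i / (i + 1) + n := Nat.add_mul_div_right i n (by omega)
      _ = n := by rw [Nat.div_eq_of_lt (by omega)]; omega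
  constructor
  · intro hbd; subst hbd
    unfold alph
    rw [← hq]
    split
    · rename_i hcase
      obtain ⟨hdvd, hodd⟩ := hcase
      have hkq : k = q * (i + 1) := by
        rw [← hdvd_q hdvd]; exact (Nat.div_mul_cancel hdvd).symm
      have hqodd : q % 2 = 1 := by
        have := hdvd_q hdvd
        rcases hodd with ⟨j, hj⟩
        omega
      -- distance = q + 1
      obtain ⟨W, hW⟩ := Gip_walk_ub i hi (q + 1) a c b b
        ⟨q + 1, le_refl _, by simp; omega, by
          have : (q + 1) * (i + 1) = (q + 1) * i + (q + 1) := by ring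
          have h2 : q * (i + 1) ≤ (q + 1) * (i + 1) := by
            have : (q+1)*(i+1) = q*(i+1) + (i+1) := by ring
            omega
          omega⟩
      have hub : (Gip i).dist (a, b) (c, b) ≤ q + 1 := le_trans (SimpleGraph.dist_le W) hW
      have hreach : (Gip i).Reachable (a, b) (c, b) := ⟨W⟩
      obtain ⟨P, hP⟩ := hreach.exists_walk_length_eq_dist
      obtain ⟨f, hf, hpar, hd⟩ := Gip_walk_bound i P
      rw [hP] at hf hd
      have hd2 : k ≤ (Gip i).dist (a, b) (c, b) * i + f := by rw [hk]; exact hd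
      simp at hpar
      set n := (Gip i).dist (a, b) (c, b) with hn
      have hq_le : q ≤ n := lower n f hf hd2
      have : q + 1 ≤ n := by
        rcases Nat.lt_or_ge q n with h | h
        · omega
        · have hnq : n = q := by omega
          rw [hnq] at hd2 hf
          have : q ≤ f := by omega
          omega
      omega
    · rename_i hcase
      push_neg at hcase
      -- distance = q
      have harith : ∃ f, f ≤ q ∧ f % 2 = 0 ∧ k ≤ q * i + f := by
        rcases Nat.even_or_odd q with ⟨j, hj⟩ | ⟨j, hj⟩
        · exact ⟨q, le_refl _, by omega, by omega⟩
        · -- q odd; then ¬(i+1)∣k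
          have hnd : ¬ (i + 1) ∣ k := by
            intro hdvd
            have h1 := hdvd_q hdvd
            have h2 := hcase hdvd
            rw [h1] at h2
            exact h2 ⟨j, by omega⟩
          have := hndvd hnd
          exact ⟨q - 1, by omega, by omega, by omega⟩
      obtain ⟨f, hf1, hf2, hf3⟩ := harith
      obtain ⟨W, hW⟩ := Gip_walk_ub i hi q a c b b ⟨f, hf1, by simp; omega, hf3⟩
      have hub : (Gip i).dist (a, b) (c, b) ≤ q := le_trans (SimpleGraph.dist_le W) hW
      have hreach : (Gip i).Reachable (a, b) (c, b) := ⟨W⟩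
      obtain ⟨P, hP⟩ := hreach.exists_walk_length_eq_dist
      obtain ⟨f', hf', hpar', hd'⟩ := Gip_walk_bound i P
      rw [hP] at hf' hd'
      have hd2 : k ≤ (Gip i).dist (a, b) (c, b) * i + f' := by rw [hk]; exact hd'
      have := lower _ f' hf' hd2
      omega
  · intro hbd
    unfold bet
    rw [← hq]
    have hbd' : (if b = d then (0:ℕ) else 1) = 1 := if_neg hbd
    have hbdsnd : (if ((a,b) : ℕ × Fin 2).2 = ((c,d) : ℕ × Fin 2).2 then (0:ℕ) else 1) = 1 := by
      simpa using hbd'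
    split
    · rename_i hcase
      obtain ⟨hdvd, heven⟩ := hcase
      have hkq : k = q * (i + 1) := by
        rw [← hdvd_q hdvd]; exact (Nat.div_mul_cancel hdvd).symm
      have hqeven : q % 2 = 0 := by
        have := hdvd_q hdvd
        rcases heven with ⟨j, hj⟩
        omega
      obtain ⟨W, hW⟩ := Gip_walk_ub i hi (q + 1) a c b d
        ⟨q + 1, le_refl _, by rw [hbd']; omega, by
          have h2 : (q+1)*(i+1) = q*(i+1) + (i+1) := by ring
          have h3 : (q + 1) * (i + 1) = (q + 1) * i + (q + 1) := by ring
          omega⟩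
      have hub : (Gip i).dist (a, b) (c, d) ≤ q + 1 := le_trans (SimpleGraph.dist_le W) hW
      have hreach : (Gip i).Reachable (a, b) (c, d) := ⟨W⟩
      obtain ⟨P, hP⟩ := hreach.exists_walk_length_eq_dist
      obtain ⟨f, hf, hpar, hd⟩ := Gip_walk_bound i P
      rw [hP] at hf hd
      have hd2 : k ≤ (Gip i).dist (a, b) (c, d) * i + f := by rw [hk]; exact hd
      rw [hbdsnd] at hpar
      set n := (Gip i).dist (a, b) (c, d) with hn
      have hq_le : q ≤ n := lower n f hf hd2
      have : q + 1 ≤ n := by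
        rcases Nat.lt_or_ge q n with h | h
        · omega
        · have hnq : n = q := by omega
          rw [hnq] at hd2 hf
          omega
      omega
    · rename_i hcase
      push_neg at hcase
      have harith : ∃ f, f ≤ q ∧ f % 2 = 1 ∧ k ≤ q * i + f := by
        rcases Nat.even_or_odd q with ⟨j, hj⟩ | ⟨j, hj⟩
        · -- q even; then ¬(i+1)∣k, and q ≥ 1
          have hnd : ¬ (i + 1) ∣ k := by
            intro hdvd
            have h1 := hdvd_q hdvd
            have h2 := hcase hdvd
            rw [h1] at h2
            exact h2 ⟨j, by omega⟩
          have hlt := hndvd hnd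
          have hq0 : q ≠ 0 := by
            intro h0
            exact hnd (by rw [h0] at hq2; simp at hq2; exact hq2 ▸ ⟨0, by omega⟩)
          exact ⟨q - 1, by omega, by omega, by omega⟩
        · exact ⟨q, le_refl _, by omega, by omega⟩
      obtain ⟨f, hf1, hf2, hf3⟩ := harith
      obtain ⟨W, hW⟩ := Gip_walk_ub i hi q a c b d ⟨f, hf1, by rw [hbd']; omega, hf3⟩
      have hub : (Gip i).dist (a, b) (c, d) ≤ q := le_trans (SimpleGraph.dist_le W) hW
      have hreach : (Gip i).Reachable (a, b) (c, d) := ⟨W⟩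
      obtain ⟨P, hP⟩ := hreach.exists_walk_length_eq_dist
      obtain ⟨f', hf', hpar', hd'⟩ := Gip_walk_bound i P
      rw [hP] at hf' hd'
      have hd2 : k ≤ (Gip i).dist (a, b) (c, d) * i + f' := by rw [hk]; exact hd'
      have := lower _ f' hf' hd2
      omega
end

section
/- For every integer i ≥ 1 and every k ∈ ℕ: if α_i(k) = α_i(k+1) = ⋯ = α_i(k+i+1), then β_i(k+i) < β_i(k+i+1); symmetrically, if β_i(k) = β_i(k+1) = ⋯ = β_i(k+i+1), then α_i(k+i) < α_i(k+i+1). -/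
/-!
Both `alph i` and `bet i` are `⌈k/(i+1)⌉` raised by one at certain multiples of `i + 1`.
Since `⌈k/(i+1)⌉` grows by exactly one from `k` to `k + i + 1`, a function of this shape can
take the same value at both ends only if it is raised at `k = (i+1) m`. For `alph` this forces
`m` odd, so `bet` is raised at `(i+1)(m+1)` and jumps there; for `bet` it forces `m` even, and
`alph` jumps at `(i+1)(m+1)`.
-/

def bumpedCeil (i : ℕ) (P : ℕ → Prop) [DecidablePred P] (k : ℕ) : ℕ :=
  if (i + 1) ∣ k ∧ P (k / (i + 1)) then (k + i) / (i + 1) + 1 else (k + i) / (i + 1)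

theorem alph_eq_bumpedCeil (i : ℕ) : alph i = bumpedCeil i Odd := rfl

theorem bet_eq_bumpedCeil (i : ℕ) : bet i = bumpedCeil i Even := rfl

section bumpedCeil

variable {i : ℕ} {P : ℕ → Prop} [DecidablePred P]

theorem exists_eq_mul_of_bumpedCeil_add_eq {k : ℕ}
    (h : bumpedCeil i P (k + (i + 1)) = bumpedCeil i P k) :
    ∃ m, k = (i + 1) * m ∧ P m := by
  have hceil : (k + (i + 1) + i) / (i + 1) = (k + i) / (i + 1) + 1 := by
    rw [Nat.add_right_comm, Nat.add_div_right _ i.add_one_pos]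
  by_cases hk : (i + 1) ∣ k ∧ P (k / (i + 1))
  · obtain ⟨⟨m, rfl⟩, hm⟩ := hk
    exact ⟨m, rfl, by rwa [Nat.mul_div_cancel_left _ i.add_one_pos] at hm⟩
  · unfold bumpedCeil at h
    rw [if_neg hk, hceil] at h
    split_ifs at h <;> omega

theorem bumpedCeil_mul_add_self_le {m : ℕ} (hm : ¬P m) :
    bumpedCeil i P ((i + 1) * m + i) ≤ m + 1 := by
  unfold bumpedCeil
  split_ifs with h
  · -- `(i + 1) ∣ i` forces `i = 0`, where the quotient is `m` itself
    obtain ⟨hdvd, hP⟩ := h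
    obtain rfl : i = 0 :=
      Nat.eq_zero_of_dvd_of_lt ((Nat.dvd_add_right (dvd_mul_right _ m)).1 hdvd) i.lt_add_one
    exact absurd (by simpa using hP) hm
  · have : (i + i) / (i + 1) < 2 := Nat.div_lt_of_lt_mul (by omega)
    rw [Nat.add_assoc, Nat.mul_add_div i.add_one_pos]
    omega

theorem bumpedCeil_mul_succ {m : ℕ} (hm : P (m + 1)) :
    bumpedCeil i P ((i + 1) * (m + 1)) = m + 2 := by
  have hceil : ((i + 1) * (m + 1) + i) / (i + 1) = m + 1 := by
    rw [Nat.mul_add_div i.add_one_pos, Nat.div_eq_of_lt i.lt_add_one, Nat.add_zero]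
  unfold bumpedCeil
  rw [if_pos ⟨dvd_mul_right _ _, by rwa [Nat.mul_div_cancel_left _ i.add_one_pos]⟩, hceil]

theorem bumpedCeil_mul_add_self_lt_succ {m : ℕ} (hm : ¬P m) (hm' : P (m + 1)) :
    bumpedCeil i P ((i + 1) * m + i) < bumpedCeil i P ((i + 1) * m + i + 1) := by
  rw [show (i + 1) * m + i + 1 = (i + 1) * (m + 1) by ring, bumpedCeil_mul_succ hm']
  exact Nat.lt_succ_of_le (bumpedCeil_mul_add_self_le hm)

end bumpedCeil

theorem alph_bet_sameside_general (i : ℕ) (k : ℕ) :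
    ((∀ j ≤ i + 1, alph i (k + j) = alph i k) → bet i (k + i) < bet i (k + i + 1)) ∧
    ((∀ j ≤ i + 1, bet i (k + j) = bet i k) → alph i (k + i) < alph i (k + i + 1)) := by
  rw [alph_eq_bumpedCeil, bet_eq_bumpedCeil]
  constructor
  · intro h
    obtain ⟨m, rfl, hm⟩ := exists_eq_mul_of_bumpedCeil_add_eq (h (i + 1) le_rfl)
    exact bumpedCeil_mul_add_self_lt_succ (Nat.not_even_iff_odd.2 hm) hm.add_one
  · intro h
    obtain ⟨m, rfl, hm⟩ := exists_eq_mul_of_bumpedCeil_add_eq (h (i + 1) le_rfl)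
    exact bumpedCeil_mul_add_self_lt_succ (Nat.not_odd_iff_even.2 hm) hm.add_one

/-- If `α_i(k) = α_i(k+1) = ⋯ = α_i(k+i+1)`, then `β_i(k+i) < β_i(k+i+1)`;
symmetrically, if `β_i(k) = β_i(k+1) = ⋯ = β_i(k+i+1)`, then `α_i(k+i) < α_i(k+i+1)`. -/
theorem alph_bet_sameside (i : ℕ) (hi : 1 ≤ i) (k : ℕ) :
    ((∀ j ≤ i + 1, alph i (k + j) = alph i k) → bet i (k + i) < bet i (k + i + 1)) ∧
    ((∀ j ≤ i + 1, bet i (k + j) = bet i k) → alph i (k + i) < alph i (k + i + 1)) :=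
  alph_bet_sameside_general i k
end

section
/- For every integer i ≥ 1 and every k ∈ ℕ: α_i(k) < β_i(k+i+1) and β_i(k) < α_i(k+i+1). -/
/-! Shifting `k` by `i + 1` raises `⌈k/(i+1)⌉` by one, keeps divisibility by `i + 1` and flips the
parity of `k/(i+1)`; so it turns `α_i` into `β_i + 1` and `β_i` into `α_i + 1`. -/

theorem bet_add_succ (i k : ℕ) : bet i (k + i + 1) = alph i k + 1 := by
  unfold alph bet
  rw [show k + i + 1 + i = k + i + (i + 1) by omega, Nat.add_div_right _ i.succ_pos]
  simp only [show k + i + 1 = k + (i + 1) by omega, Nat.dvd_add_self_right,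
    Nat.add_div_right _ i.succ_pos, Nat.even_add_one, Nat.not_even_iff_odd]
  split_ifs <;> rfl

theorem alph_add_succ (i k : ℕ) : alph i (k + i + 1) = bet i k + 1 := by
  unfold alph bet
  rw [show k + i + 1 + i = k + i + (i + 1) by omega, Nat.add_div_right _ i.succ_pos]
  simp only [show k + i + 1 = k + (i + 1) by omega, Nat.dvd_add_self_right,
    Nat.add_div_right _ i.succ_pos, Nat.odd_add_one, Nat.not_odd_iff_even]
  split_ifs <;> rfl

theorem alph_bet_diagonal_general (i : ℕ) (k : ℕ) :
    alph i k < bet i (k + i + 1) ∧ bet i k < alph i (k + i + 1) := by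
  rw [bet_add_succ, alph_add_succ]
  exact ⟨Nat.lt_succ_self _, Nat.lt_succ_self _⟩

/-- For every `k`, `α_i(k) < β_i(k+i+1)` and `β_i(k) < α_i(k+i+1)`. -/
theorem alph_bet_diagonal (i : ℕ) (hi : 1 ≤ i) (k : ℕ) :
    alph i k < bet i (k + i + 1) ∧ bet i k < alph i (k + i + 1) :=
  alph_bet_diagonal_general i k
end

section
/- Let G be a connected simple graph (possibly infinite), let uv be an edge of G, and let G' be obtained from G by removing the edge uv, where G' is assumed connected. If W is a resolving set of G, then W ∪ {u, v} is a resolving set of G'. -/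
namespace SimpleGraph

variable {V : Type*} (H : SimpleGraph V) (u v : V)

noncomputable def edistViaEdge (a b : V) : ℕ∞ :=
  min (H.edist a b) (min (H.edist a u + 1 + H.edist v b) (H.edist a v + 1 + H.edist u b))

variable {H u v}

lemma edistViaEdge_le_succ_of_adj {a c : V} (b : V) (hac : (H ⊔ edge u v).Adj a c) :
    H.edistViaEdge u v a b ≤ H.edistViaEdge u v c b + 1 := by
  simp only [edistViaEdge, ← min_add_add_right]
  rw [sup_adj, edge_adj] at hac
  rcases hac with hac | ⟨⟨rfl, rfl⟩ | ⟨rfl, rfl⟩, -⟩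
  · have hstep : ∀ z, H.edist a z ≤ H.edist c z + 1 := fun z =>
      calc H.edist a z ≤ H.edist a c + H.edist c z := H.edist_triangle
        _ = H.edist c z + 1 := by rw [edist_eq_one_iff_adj.mpr hac, add_comm]
    gcongr ?_ ⊓ (?_ ⊓ ?_)
    · exact hstep b
    · calc _ ≤ H.edist c u + 1 + 1 + H.edist v b := by gcongr; exact hstep u
        _ = _ := by ring
    · calc _ ≤ H.edist c v + 1 + 1 + H.edist u b := by gcongr; exact hstep v
        _ = _ := by ring
  · refine le_min ?_ (le_min ?_ ?_)
    · exact (min_le_right _ _).trans (min_le_left _ _) |>.trans (by simp [add_comm])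
    · exact (min_le_right _ _).trans (min_le_left _ _) |>.trans (by simp [add_comm])
    · exact (min_le_left _ _).trans (le_add_self.trans le_self_add)
  · refine le_min ?_ (le_min ?_ ?_)
    · exact (min_le_right _ _).trans (min_le_right _ _) |>.trans (by simp [add_comm])
    · exact (min_le_left _ _).trans (le_add_self.trans le_self_add)
    · exact (min_le_right _ _).trans (min_le_right _ _) |>.trans (by simp [add_comm])

lemma edistViaEdge_le_length {a b : V} (p : (H ⊔ edge u v).Walk a b) :
    H.edistViaEdge u v a b ≤ p.length := by
  induction p with
  | nil => exact (min_le_left _ _).trans edist_self.le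
  | cons hac q ih =>
    calc _ ≤ _ + 1 := edistViaEdge_le_succ_of_adj _ hac
      _ ≤ q.length + 1 := by gcongr
      _ = (q.cons hac).length := by simp

theorem edist_sup_edge (a b : V) : (H ⊔ edge u v).edist a b = H.edistViaEdge u v a b := by
  set H' := H ⊔ edge u v
  have hdetour : ∀ {z w}, H'.edist z w ≤ 1 → H'.edist a b ≤ H.edist a z + 1 + H.edist w b :=
    fun {z w} hzw =>
      calc H'.edist a b ≤ H'.edist a z + (H'.edist z w + H'.edist w b) :=
            H'.edist_triangle.trans (by gcongr; exact H'.edist_triangle)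
        _ ≤ H.edist a z + 1 + H.edist w b := by
            rw [← add_assoc]; gcongr <;> exact le_sup_left
  have huv : H'.edist u v ≤ 1 := edist_le_one_iff_adj_or_eq.mpr <|
    (em (u = v)).elim .inr fun h => .inl (.inr ((edge_adj ..).mpr ⟨.inl ⟨rfl, rfl⟩, h⟩))
  refine le_antisymm (le_min (edist_anti le_sup_left) <|
    le_min (hdetour huv) (hdetour (edist_comm ▸ huv))) ?_
  by_cases hr : H'.Reachable a b
  · obtain ⟨p, hp⟩ := hr.exists_walk_length_eq_edist
    exact hp ▸ edistViaEdge_le_length p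
  · simp [edist_eq_top_of_not_reachable hr]

lemma deleteEdges_sup_edge {G : SimpleGraph V} (h : G.Adj u v) :
    G.deleteEdges {s(u, v)} ⊔ edge u v = G :=
  sdiff_sup_cancel ((edge_le_iff G).mpr (.inr h))

end SimpleGraph

theorem resolvingSet_deleteEdge_general {V : Type*} (G : SimpleGraph V)
    (u v : V) (hadj : G.Adj u v)
    (hconn : (G.deleteEdges {s(u, v)}).Connected)
    (W : Set V) (hW : IsResolving G W) :
    IsResolving (G.deleteEdges {s(u, v)}) (W ∪ {u, v}) := by
  intro x y hxy
  by_contra! hdist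
  have hedist : ∀ z ∈ W ∪ {u, v},
      (G.deleteEdges {s(u, v)}).edist z x = (G.deleteEdges {s(u, v)}).edist z y := fun z hz => by
    rw [← (hconn z x).coe_dist_eq_edist, ← (hconn z y).coe_dist_eq_edist, hdist z hz]
  obtain ⟨w, hw, hne⟩ := hW x y hxy
  rw [← SimpleGraph.deleteEdges_sup_edge hadj] at hne
  refine hne (congrArg ENat.toNat ?_)
  rw [SimpleGraph.edist_sup_edge, SimpleGraph.edist_sup_edge, SimpleGraph.edistViaEdge,
    SimpleGraph.edistViaEdge, hedist w (.inl hw), hedist u (.inr (.inl rfl)),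
    hedist v (.inr (.inr rfl))]

/-- Edge removal: let `G` be connected, `uv` an edge of `G`, and let `G'` be `G` with the
edge `uv` removed, assumed connected.  If `W` is a resolving set of `G`, then
`W ∪ {u, v}` is a resolving set of `G'`. -/
theorem resolvingSet_deleteEdge {V : Type*} (G : SimpleGraph V) (hG : G.Connected)
    (u v : V) (hadj : G.Adj u v)
    (hconn : (G.deleteEdges {s(u, v)}).Connected)
    (W : Set V) (hW : IsResolving G W) :
    IsResolving (G.deleteEdges {s(u, v)}) (W ∪ {u, v}) :=
  resolvingSet_deleteEdge_general G u v hadj hconn W hW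
end

section
/- The infinite ladder graph G_0' has metric dimension exactly 2: the set {v_{0,0}, v_{0,1}} is a resolving set, and no single vertex forms a resolving set. -/
/-- The infinite ladder on `ℕ × Fin 2`: `(a,b)` and `(c,d)` are adjacent iff
`a = c` and `b ≠ d` (a rung), or `|a - c| = 1` and `b = d` (a rail edge). -/
def ladder : SimpleGraph (ℕ × Fin 2) where
  Adj x y := (x.1 = y.1 ∧ x.2 ≠ y.2) ∨ (Nat.dist x.1 y.1 = 1 ∧ x.2 = y.2)
  symm := by
    constructor
    rintro x y (⟨h1, h2⟩ | ⟨h1, h2⟩)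
    · exact Or.inl ⟨h1.symm, h2.symm⟩
    · exact Or.inr ⟨by rwa [Nat.dist_comm], h2.symm⟩
  loopless := by
    constructor
    rintro x (⟨h1, h2⟩ | ⟨h1, h2⟩)
    · exact h2 rfl
    · simp [Nat.dist_self] at h1

lemma ladder_walk_le {x y : ℕ × Fin 2} (p : ladder.Walk x y) :
    Nat.dist x.1 y.1 + (if x.2 = y.2 then 0 else 1) ≤ p.length := by
  induction p with
  | nil => simp
  | @cons x b y h p ih =>
    rcases h with ⟨h1, h2⟩ | ⟨h1, h2⟩
    · have hN : Nat.dist x.1 y.1 = Nat.dist b.1 y.1 := by rw [h1]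
      have : (if x.2 = y.2 then 0 else 1) ≤ 1 := by split <;> omega
      show _ ≤ p.length + 1
      omega
    · have hN : Nat.dist x.1 y.1 ≤ Nat.dist b.1 y.1 + 1 := by
        have := Nat.dist.triangle_inequality x.1 b.1 y.1
        omega
      have hi : (if x.2 = y.2 then 0 else 1) = (if b.2 = y.2 then 0 else 1) := by rw [h2]
      show _ ≤ p.length + 1
      omega

lemma nd (a c : ℕ) : Nat.dist a c = a - c + (c - a) := rfl

lemma rail_walk (b : Fin 2) : ∀ n a c, Nat.dist a c = n →
    ∃ p : ladder.Walk (a, b) (c, b), p.length = n := by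
  intro n
  induction n with
  | zero =>
    intro a c h
    obtain rfl : a = c := Nat.eq_of_dist_eq_zero h
    exact ⟨SimpleGraph.Walk.nil, rfl⟩
  | succ n ih =>
    intro a c h
    rw [nd] at h
    rcases lt_or_gt_of_ne (show a ≠ c by omega) with hlt | hgt
    · have hadj : ladder.Adj (a, b) (a + 1, b) := Or.inr ⟨by rw [nd]; omega, rfl⟩
      obtain ⟨p, hp⟩ := ih (a + 1) c (by rw [nd]; omega)
      exact ⟨SimpleGraph.Walk.cons hadj p, by simp [hp]⟩
    · have hadj : ladder.Adj (a, b) (a - 1, b) := Or.inr ⟨by rw [nd]; omega, rfl⟩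
      obtain ⟨p, hp⟩ := ih (a - 1) c (by rw [nd]; omega)
      exact ⟨SimpleGraph.Walk.cons hadj p, by simp [hp]⟩

lemma ladder_exists_walk (a c : ℕ) (b d : Fin 2) :
    ∃ p : ladder.Walk (a, b) (c, d), p.length = Nat.dist a c + (if b = d then 0 else 1) := by
  obtain ⟨p, hp⟩ := rail_walk b (Nat.dist a c) a c rfl
  by_cases hbd : b = d
  · subst hbd; exact ⟨p, by simp [hp]⟩
  · have hadj : ladder.Adj (c, b) (c, d) := Or.inl ⟨rfl, by simpa using hbd⟩
    exact ⟨p.concat hadj, by simp [hp, hbd]⟩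

lemma ladder_dist (a c : ℕ) (b d : Fin 2) :
    ladder.dist (a, b) (c, d) = Nat.dist a c + (if b = d then 0 else 1) := by
  obtain ⟨p, hp⟩ := ladder_exists_walk a c b d
  apply le_antisymm
  · exact hp ▸ SimpleGraph.dist_le p
  · obtain ⟨q, hq⟩ := (show ladder.Reachable (a, b) (c, d) from ⟨p⟩).exists_walk_length_eq_dist
    have := ladder_walk_le q
    simpa [hq] using this

/-- The infinite ladder has metric dimension exactly `2`: the set
`{v_{0,0}, v_{0,1}}` is a resolving set, and no single vertex forms a resolving set. -/
theorem ladder_metricDim_eq_two :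
    IsResolving ladder {((0 : ℕ), (0 : Fin 2)), ((0 : ℕ), (1 : Fin 2))} ∧
    (∀ w : ℕ × Fin 2, ¬ IsResolving ladder {w}) ∧
    metricDim ladder = 2 := by
  have hres : IsResolving ladder {((0 : ℕ), (0 : Fin 2)), ((0 : ℕ), (1 : Fin 2))} := by
    rintro ⟨a, b⟩ ⟨c, d⟩ hxy
    by_contra h
    push_neg at h
    have h0 := h ((0 : ℕ), (0 : Fin 2)) (by simp)
    have h1 := h ((0 : ℕ), (1 : Fin 2)) (by decide)
    rw [ladder_dist, ladder_dist] at h0 h1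
    simp only [Nat.dist_zero_left] at h0 h1
    fin_cases b <;> fin_cases d <;> simp_all <;> omega
  have hsingle : ∀ w : ℕ × Fin 2, ¬ IsResolving ladder {w} := by
    rintro ⟨s, t⟩ hr
    obtain ⟨w, hw, hd⟩ := hr (s + 1, t) (s, t + 1) (by simp)
    rw [Set.mem_singleton_iff] at hw
    subst hw
    rw [ladder_dist, ladder_dist] at hd
    have : t ≠ t + 1 := by fin_cases t <;> decide
    rw [nd] at hd; simp [this] at hd
  refine ⟨hres, hsingle, ?_⟩
  apply le_antisymm
  · apply sInf_le
    refine ⟨_, hres, ?_⟩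
    rw [Set.encard_pair (by decide)]
  · apply le_sInf
    rintro e ⟨W, hW, rfl⟩
    have hne : W.Nonempty := by
      obtain ⟨w, hw, -⟩ := hW ((0 : ℕ), (0 : Fin 2)) ((0 : ℕ), (1 : Fin 2)) (by decide)
      exact ⟨w, hw⟩
    have hnt : W.Nontrivial := by
      by_contra h
      rw [Set.not_nontrivial_iff] at h
      obtain ⟨w, hw⟩ := hne
      exact hsingle w (h.eq_singleton_of_mem hw ▸ hW)
    obtain ⟨u, hu, v, hv, huv⟩ := hnt
    calc (2 : ℕ∞) = ({u, v} : Set (ℕ × Fin 2)).encard := (Set.encard_pair huv).symm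
      _ ≤ W.encard := Set.encard_mono (by simp [Set.insert_subset_iff, hu, hv])
end

section
/- Let G and G' be connected simple graphs (possibly infinite) on the same vertex set such that the symmetric difference of their edge sets is finite. Then G has a finite resolving set if and only if G' has a finite resolving set; equivalently, the metric dimension of G is finite iff the metric dimension of G' is finite. -/
namespace MetricDimAux

open SimpleGraph

variable {V : Type*}

/-- Distance formula after adding a single edge `a b`. -/
lemma dist_sup_edge (G : SimpleGraph V) (hG : G.Connected) {a b : V} (hab : a ≠ b) (u v : V) :
    (G ⊔ SimpleGraph.fromEdgeSet {s(a, b)}).dist u v =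
      min (G.dist u v) (min (G.dist u a + 1 + G.dist b v) (G.dist u b + 1 + G.dist a v)) := by
  have hGH : G ≤ G ⊔ SimpleGraph.fromEdgeSet {s(a, b)} := le_sup_left
  have hH : (G ⊔ SimpleGraph.fromEdgeSet {s(a, b)}).Connected := hG.mono hGH
  have hadj : (G ⊔ SimpleGraph.fromEdgeSet {s(a, b)}).Adj a b := by
    rw [SimpleGraph.sup_adj]
    exact Or.inr ((SimpleGraph.fromEdgeSet_adj _).mpr ⟨rfl, hab⟩)
  apply le_antisymm
  · refine le_min ?_ (le_min ?_ ?_)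
    · obtain ⟨p, hp⟩ := hG.exists_walk_length_eq_dist u v
      have := SimpleGraph.dist_le (p.mapLe hGH)
      rwa [SimpleGraph.Walk.length_map, hp] at this
    · obtain ⟨p, hp⟩ := hG.exists_walk_length_eq_dist u a
      obtain ⟨q, hq⟩ := hG.exists_walk_length_eq_dist b v
      have := SimpleGraph.dist_le ((p.mapLe hGH).append (SimpleGraph.Walk.cons hadj (q.mapLe hGH)))
      rw [SimpleGraph.Walk.length_append, SimpleGraph.Walk.length_cons,
        SimpleGraph.Walk.length_map, SimpleGraph.Walk.length_map, hp, hq] at this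
      omega
    · obtain ⟨p, hp⟩ := hG.exists_walk_length_eq_dist u b
      obtain ⟨q, hq⟩ := hG.exists_walk_length_eq_dist a v
      have := SimpleGraph.dist_le
        ((p.mapLe hGH).append (SimpleGraph.Walk.cons hadj.symm (q.mapLe hGH)))
      rw [SimpleGraph.Walk.length_append, SimpleGraph.Walk.length_cons,
        SimpleGraph.Walk.length_map, SimpleGraph.Walk.length_map, hp, hq] at this
      omega
  · obtain ⟨p, hp⟩ := hH.exists_walk_length_eq_dist u v
    rw [← hp]
    clear hp
    induction p with
    | nil =>
      simp [SimpleGraph.dist_self]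
    | @cons u' w' v' hadj' q ih =>
      rw [SimpleGraph.Walk.length_cons]
      rcases (SimpleGraph.sup_adj _ _ _ _).mp hadj' with hGadj | hEadj
      · have h1 : G.dist u' w' = 1 := SimpleGraph.dist_eq_one_iff_adj.mpr hGadj
        have h2 : G.dist u' v' ≤ G.dist u' w' + G.dist w' v' := hG.dist_triangle
        have h3 : G.dist u' a ≤ G.dist u' w' + G.dist w' a := hG.dist_triangle
        have h4 : G.dist u' b ≤ G.dist u' w' + G.dist w' b := hG.dist_triangle
        omega
      · have hmem := ((SimpleGraph.fromEdgeSet_adj _).mp hEadj).1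
        rw [Set.mem_singleton_iff, Sym2.eq_iff] at hmem
        have hda : G.dist a a = 0 := SimpleGraph.dist_self
        have hdb : G.dist b b = 0 := SimpleGraph.dist_self
        rcases hmem with ⟨h1, h2⟩ | ⟨h1, h2⟩ <;> subst h1 <;> subst h2 <;> omega

/-- If a graph has a finite resolving set, then all its balls are finite. -/
lemma ball_finite {G : SimpleGraph V} (hG : G.Connected) {W : Set V} (hWf : W.Finite)
    (hres : IsResolving G W) (a : V) (R : ℕ) : {v : V | G.dist a v ≤ R}.Finite := by
  classical
  have hFin : Finite ↥W := hWf.to_subtype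
  have hinj : Function.Injective (fun v (w : W) => G.dist (w : V) v) := by
    intro x y hxy
    by_contra hne
    obtain ⟨w, hw, hd⟩ := hres x y hne
    exact hd (congrFun hxy ⟨w, hw⟩)
  have hsub : (fun v (w : W) => G.dist (w : V) v) '' {v : V | G.dist a v ≤ R} ⊆
      {f : W → ℕ | ∀ w : W, f w ∈ Set.Iic (G.dist (w : V) a + R)} := by
    rintro f ⟨v, hv, rfl⟩ w
    have h1 : G.dist (w : V) v ≤ G.dist (w : V) a + G.dist a v := hG.dist_triangle
    have hv' : G.dist a v ≤ R := hv
    simp only [Set.mem_Iic]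
    omega
  exact Set.Finite.of_finite_image
    ((Set.Finite.pi' (fun w => Set.finite_Iic _)).subset hsub) hinj.injOn

/-- Discrete intermediate value theorem along a walk. -/
lemma exists_dist_eq_on_walk {G : SimpleGraph V} (hG : G.Connected) (a : V) (R : ℕ) :
    ∀ {w x : V} (p : G.Walk w x), G.dist a w ≤ R → R < G.dist a x →
      ∃ u ∈ p.support, G.dist a u = R := by
  intro w x p
  induction p with
  | nil =>
    intro h1 h2
    exact absurd h2 (not_lt.mpr h1)
  | @cons u' w' v' hadj q ih =>
    intro h1 h2
    by_cases hc : G.dist a u' = R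
    · exact ⟨u', SimpleGraph.Walk.start_mem_support _, hc⟩
    · have h3 : G.dist a w' ≤ G.dist a u' + G.dist u' w' := hG.dist_triangle
      have h4 : G.dist u' w' = 1 := SimpleGraph.dist_eq_one_iff_adj.mpr hadj
      obtain ⟨u, hu, hdu⟩ := ih (by omega) h2
      exact ⟨u, by rw [SimpleGraph.Walk.support_cons]; exact List.mem_cons_of_mem _ hu, hdu⟩

/-- A vertex on a geodesic splits the distance additively. -/
lemma dist_add_dist_of_mem_support {G : SimpleGraph V} (hG : G.Connected) {w x u : V}
    (p : G.Walk w x) (hp : p.length = G.dist w x) (hu : u ∈ p.support) :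
    G.dist w u + G.dist u x = G.dist w x := by
  classical
  have h1 := SimpleGraph.dist_le (p.takeUntil u hu)
  have h2 := SimpleGraph.dist_le (p.dropUntil u hu)
  have h3 : (p.takeUntil u hu).length + (p.dropUntil u hu).length = p.length := by
    rw [← SimpleGraph.Walk.length_append, p.take_spec hu]
  have h4 : G.dist w x ≤ G.dist w u + G.dist u x := hG.dist_triangle
  omega

/-- The hard direction: adding one edge preserves having a finite resolving set. -/
lemma exists_finite_resolving_sup_edge {G : SimpleGraph V} (hG : G.Connected) {a b : V}
    (hab : a ≠ b) {W : Set V} (hWf : W.Finite) (hres : IsResolving G W) :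
    ∃ W' : Set V, W'.Finite ∧ IsResolving (G ⊔ SimpleGraph.fromEdgeSet {s(a, b)}) W' := by
  classical
  set H := G ⊔ SimpleGraph.fromEdgeSet {s(a, b)} with hHdef
  have hd : ∀ u v, H.dist u v =
      min (G.dist u v) (min (G.dist u a + 1 + G.dist b v) (G.dist u b + 1 + G.dist a v)) :=
    dist_sup_edge G hG hab
  have hHconn : H.Connected := hG.mono le_sup_left
  set M : ℕ := hWf.toFinset.sup (fun w => G.dist w a) with hM
  set R : ℕ := M + G.dist a b + 2 with hR
  set W' : Set V := (W ∪ {a, b}) ∪ {v : V | G.dist a v ≤ R} with hW'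
  have haW' : a ∈ W' := Or.inl (Or.inr (Set.mem_insert a {b}))
  have hballW' : ∀ v : V, G.dist a v ≤ R → v ∈ W' := fun v hv => Or.inr hv
  refine ⟨W', (hWf.union ((Set.finite_singleton b).insert a)).union
    (ball_finite hG hWf hres a R), ?_⟩
  intro x y hxy
  by_contra hcon
  push_neg at hcon
  -- hcon : ∀ w ∈ W', H.dist w x = H.dist w y
  have hax : R < G.dist a x := by
    by_contra h
    push_neg at h
    have h0 := hcon x (hballW' x h)
    have hx0 : H.dist x x = 0 := SimpleGraph.dist_self
    exact hxy (hHconn.dist_eq_zero_iff.mp (by omega))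
  have hay : R < G.dist a y := by
    by_contra h
    push_neg at h
    have h0 := hcon y (hballW' y h)
    have hy0 : H.dist y y = 0 := SimpleGraph.dist_self
    have : H.dist y x = 0 := by omega
    exact hxy ((hHconn.dist_eq_zero_iff.mp this).symm)
  -- the core one-sided estimate
  have core : ∀ x' y' : V, (∀ w ∈ W', H.dist w x' = H.dist w y') →
      R < G.dist a x' → R < G.dist a y' → ∀ w ∈ W, G.dist w y' ≤ G.dist w x' := by
    intro x' y' hcon' hax' hay' w hw
    have hP : G.dist w a ≤ M := by
      rw [hM]
      exact Finset.le_sup (f := fun w => G.dist w a) (hWf.mem_toFinset.mpr hw)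
    -- observer a pins |A - A'| ≤ ℓ - 1
    have hcona := hcon' a haW'
    have hAx := hd a x'
    have hAy := hd a y'
    have hda : G.dist a a = 0 := SimpleGraph.dist_self
    have t1 : G.dist a x' ≤ G.dist a b + G.dist b x' := hG.dist_triangle
    have t2 : G.dist a y' ≤ G.dist a b + G.dist b y' := hG.dist_triangle
    have hab1 : 1 ≤ G.dist a b := hG.pos_dist_of_ne hab
    have hAA' : G.dist a x' + 1 ≤ G.dist a y' + G.dist a b := by
      rw [hAx, hAy] at hcona
      omega
    -- geodesic from w to x', take exit point of the ball
    have hcaw : G.dist a w = G.dist w a := SimpleGraph.dist_comm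
    obtain ⟨p, hp⟩ := hG.exists_walk_length_eq_dist w x'
    obtain ⟨u, hu, hdu⟩ := exists_dist_eq_on_walk hG a R p (by omega) hax'
    have hsplit := dist_add_dist_of_mem_support hG p hp hu
    have htri1 : G.dist a u ≤ G.dist a w + G.dist w u := hG.dist_triangle
    have htri2 : G.dist w x' ≤ G.dist w a + G.dist a x' := hG.dist_triangle
    have htri3 : G.dist a u ≤ G.dist a b + G.dist b u := hG.dist_triangle
    have htri4 : G.dist w y' ≤ G.dist w u + G.dist u y' := hG.dist_triangle
    have hconu := hcon' u (hballW' u hdu.le)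
    have hux := hd u x'
    have huy := hd u y'
    have c1 : G.dist u a = G.dist a u := SimpleGraph.dist_comm
    have c2 : G.dist u b = G.dist b u := SimpleGraph.dist_comm
    rw [hux, huy] at hconu
    omega
  obtain ⟨w, hw, hne⟩ := hres x y hxy
  exact hne (le_antisymm
    (core y x (fun w hw => (hcon w hw).symm) hay hax w hw)
    (core x y hcon hax hay w hw))

/-- The easy direction: a resolving set of `G ⊔ e` yields one of `G`. -/
lemma resolving_of_sup_edge {G : SimpleGraph V} (hG : G.Connected) {a b : V} (hab : a ≠ b)
    {W : Set V} (hres : IsResolving (G ⊔ SimpleGraph.fromEdgeSet {s(a, b)}) W) :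
    IsResolving G (W ∪ {a, b}) := by
  intro x y hxy
  by_contra hcon
  push_neg at hcon
  obtain ⟨w, hw, hne⟩ := hres x y hxy
  apply hne
  have ha := hcon a (Or.inr (Set.mem_insert a {b}))
  have hb := hcon b (Or.inr (Set.mem_insert_of_mem a rfl))
  have hwq := hcon w (Or.inl hw)
  rw [dist_sup_edge G hG hab, dist_sup_edge G hG hab, hwq, ha, hb]

/-- One-edge step, as an iff. -/
lemma step {G : SimpleGraph V} (hG : G.Connected) {a b : V} (hab : a ≠ b) :
    (∃ W : Set V, W.Finite ∧ IsResolving G W) ↔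
      (∃ W : Set V, W.Finite ∧ IsResolving (G ⊔ SimpleGraph.fromEdgeSet {s(a, b)}) W) := by
  constructor
  · rintro ⟨W, hWf, hres⟩
    exact exists_finite_resolving_sup_edge hG hab hWf hres
  · rintro ⟨W, hWf, hres⟩
    exact ⟨W ∪ {a, b}, hWf.union ((Set.finite_singleton b).insert a),
      resolving_of_sup_edge hG hab hres⟩

/-- Adding finitely many edges preserves having a finite resolving set. -/
lemma many {G : SimpleGraph V} (hG : G.Connected) {F : Set (Sym2 V)} (hF : F.Finite) :
    (∃ W : Set V, W.Finite ∧ IsResolving G W) ↔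
      (∃ W : Set V, W.Finite ∧ IsResolving (G ⊔ SimpleGraph.fromEdgeSet F) W) := by
  classical
  refine Set.Finite.induction_on
    (motive := fun s _ => ((∃ W : Set V, W.Finite ∧ IsResolving G W) ↔
      (∃ W : Set V, W.Finite ∧ IsResolving (G ⊔ SimpleGraph.fromEdgeSet s) W))) F hF ?_ ?_
  · show (∃ W : Set V, W.Finite ∧ IsResolving G W) ↔
      (∃ W : Set V, W.Finite ∧ IsResolving (G ⊔ SimpleGraph.fromEdgeSet ∅) W)
    rw [SimpleGraph.fromEdgeSet_empty, sup_bot_eq]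
  · intro e F' heF' hF' ih
    show (∃ W : Set V, W.Finite ∧ IsResolving G W) ↔
      (∃ W : Set V, W.Finite ∧ IsResolving (G ⊔ SimpleGraph.fromEdgeSet (insert e F')) W)
    have hrw : G ⊔ SimpleGraph.fromEdgeSet (insert e F') =
        (G ⊔ SimpleGraph.fromEdgeSet F') ⊔ SimpleGraph.fromEdgeSet {e} := by
      rw [Set.insert_eq, SimpleGraph.fromEdgeSet_union, sup_comm (SimpleGraph.fromEdgeSet {e}) _,
        ← sup_assoc]
    rw [hrw]
    refine ih.trans ?_
    clear ih heF' hF'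
    induction e using Sym2.ind with
    | _ c d =>
      by_cases hcd : c = d
      · subst hcd
        have hbot : SimpleGraph.fromEdgeSet {s(c, c)} = (⊥ : SimpleGraph V) := by
          ext u v
          simp only [SimpleGraph.fromEdgeSet_adj, Set.mem_singleton_iff, Sym2.eq_iff,
            SimpleGraph.bot_adj, iff_false, not_and]
          rintro (⟨rfl, rfl⟩ | ⟨rfl, rfl⟩) h <;> exact h rfl
        rw [hbot, sup_bot_eq]
      · exact step (hG.mono le_sup_left) hcd

end MetricDimAux

/-- If `G` and `G'` are connected graphs on the same vertex set whose edge sets have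
finite symmetric difference, then `G` has a finite resolving set iff `G'` has one;
i.e. the metric dimension of `G` is finite iff that of `G'` is. -/
theorem finite_resolvingSet_iff_of_finite_symmDiff {V : Type*}
    (G G' : SimpleGraph V) (hG : G.Connected) (hG' : G'.Connected)
    (hfin : (symmDiff G.edgeSet G'.edgeSet).Finite) :
    (∃ W : Set V, W.Finite ∧ IsResolving G W) ↔
      (∃ W : Set V, W.Finite ∧ IsResolving G' W) := by
  classical
  have hfin1 : (G'.edgeSet \ G.edgeSet).Finite := by
    refine hfin.subset fun e he => ?_
    rw [Set.mem_symmDiff]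
    exact Or.inr ⟨he.1, he.2⟩
  have hfin2 : (G.edgeSet \ G'.edgeSet).Finite := by
    refine hfin.subset fun e he => ?_
    rw [Set.mem_symmDiff]
    exact Or.inl ⟨he.1, he.2⟩
  have h1 : G ⊔ SimpleGraph.fromEdgeSet (G'.edgeSet \ G.edgeSet) = G ⊔ G' := by
    rw [← SimpleGraph.edgeSet_inj, SimpleGraph.edgeSet_sup, SimpleGraph.edgeSet_sup,
      SimpleGraph.edgeSet_fromEdgeSet]
    ext e
    constructor
    · rintro (h | ⟨⟨h, -⟩, -⟩)
      · exact Or.inl h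
      · exact Or.inr h
    · rintro (h | h)
      · exact Or.inl h
      · by_cases hG : e ∈ G.edgeSet
        · exact Or.inl hG
        · exact Or.inr ⟨⟨h, hG⟩, G'.not_isDiag_of_mem_edgeSet h⟩
  have h2 : G' ⊔ SimpleGraph.fromEdgeSet (G.edgeSet \ G'.edgeSet) = G ⊔ G' := by
    rw [← SimpleGraph.edgeSet_inj, SimpleGraph.edgeSet_sup, SimpleGraph.edgeSet_sup,
      SimpleGraph.edgeSet_fromEdgeSet]
    ext e
    constructor
    · rintro (h | ⟨⟨h, -⟩, -⟩)
      · exact Or.inr h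
      · exact Or.inl h
    · rintro (h | h)
      · by_cases hg : e ∈ G'.edgeSet
        · exact Or.inl hg
        · exact Or.inr ⟨⟨h, hg⟩, G.not_isDiag_of_mem_edgeSet h⟩
      · exact Or.inl h
  have e1 := MetricDimAux.many hG hfin1
  have e2 := MetricDimAux.many hG' hfin2
  rw [h1] at e1
  rw [h2] at e2
  exact e1.trans e2.symm
end

section
/- Let G be a connected simple graph, u and v nonadjacent vertices of G, and G' = G + uv. Let w, x, y be vertices with d_G(w,x) < d_G(w,y) and d_{G'}(w,x) = d_{G'}(w,y). Let P be a geodesic from w to x in G and let w' be a vertex of P. If there exists a geodesic from w' to y in G' that does not traverse the edge uv, then w' resolves x and y in G', i.e., d_{G'}(w',x) ≠ d_{G'}(w',y). -/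
/-!
The vertex `w'` splits the `G`-geodesic `P` into pieces of lengths `a + b = d_G(w,x)`, and the
`G'`-geodesic from `w'` to `y` that avoids `uv` is a walk in `G`. If `w'` did not resolve `x`
and `y` in `G'`, then
`d_G(w,y) ≤ a + d_{G'}(w',y) = a + d_{G'}(w',x) ≤ a + b = d_G(w,x)`,
contradicting `d_G(w,x) < d_G(w,y)`.
-/

namespace SimpleGraph

variable {V : Type*}

theorem Walk.mem_edgeSet_of_sup_fromEdgeSet {G : SimpleGraph V} {s : Set (Sym2 V)} {a b : V}
    (p : (G ⊔ fromEdgeSet s).Walk a b) (hp : ∀ e ∈ s, e ∉ p.edges) :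
    ∀ e ∈ p.edges, e ∈ G.edgeSet := by
  intro e he
  have hmem := p.edges_subset_edgeSet he
  rw [edgeSet_sup, edgeSet_fromEdgeSet] at hmem
  exact hmem.resolve_right fun hs => hp e hs.1 he

theorem dist_le_of_mem_support_of_dist_le {G H : SimpleGraph V} (hGH : G ≤ H)
    {w x y w' : V} (P : G.Walk w x) (hP : P.length = G.dist w x) (hw' : w' ∈ P.support)
    (Q : G.Walk w' y) (hQ : Q.length = H.dist w' y) (h : H.dist w' y ≤ H.dist w' x) :
    G.dist w y ≤ G.dist w x := by
  classical
  calc G.dist w y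
      ≤ ((P.takeUntil w' hw').append Q).length := dist_le _
    _ ≤ (P.takeUntil w' hw').length + H.dist w' x := by
        rw [Walk.length_append, hQ]
        gcongr
    _ ≤ (P.takeUntil w' hw').length + (P.dropUntil w' hw').length := by
        gcongr
        simpa using dist_le ((P.dropUntil w' hw').mapLe hGH)
    _ = G.dist w x := by rw [← Walk.length_append, P.take_spec hw', hP]

end SimpleGraph

theorem resolves_of_geodesic_avoiding_newEdge_general {V : Type*} (G : SimpleGraph V)
    (u v : V)
    (w x y w' : V)
    (hlt : G.dist w x < G.dist w y)
    (P : G.Walk w x) (hPlen : P.length = G.dist w x)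
    (hw' : w' ∈ P.support)
    (Q : (G ⊔ SimpleGraph.fromEdgeSet {s(u, v)}).Walk w' y)
    (hQlen : Q.length = (G ⊔ SimpleGraph.fromEdgeSet {s(u, v)}).dist w' y)
    (hQe : s(u, v) ∉ Q.edges) :
    (G ⊔ SimpleGraph.fromEdgeSet {s(u, v)}).dist w' x ≠
      (G ⊔ SimpleGraph.fromEdgeSet {s(u, v)}).dist w' y := by
  intro h
  have hQG := Q.mem_edgeSet_of_sup_fromEdgeSet fun e he => (Set.mem_singleton_iff.mp he) ▸ hQe
  have hle := SimpleGraph.dist_le_of_mem_support_of_dist_le le_sup_left P hPlen hw' (Q.transfer G hQG)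
    ((Q.length_transfer hQG).trans hQlen) h.ge
  exact hlt.not_ge hle

/-- Key lemma for edge addition.  Let `G` be connected, `u ≠ v` nonadjacent, and
`G' = G + uv`.  Suppose `d_G(w,x) < d_G(w,y)` while `d_{G'}(w,x) = d_{G'}(w,y)`.
Let `P` be a geodesic from `w` to `x` in `G` and `w'` a vertex of `P`.  If there is a
geodesic from `w'` to `y` in `G'` not traversing the edge `uv`, then `w'` resolves
`x` and `y` in `G'`. -/
theorem resolves_of_geodesic_avoiding_newEdge {V : Type*} (G : SimpleGraph V)
    (hG : G.Connected) (u v : V) (hne : u ≠ v) (hnadj : ¬ G.Adj u v)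
    (w x y w' : V)
    (hlt : G.dist w x < G.dist w y)
    (heq : (G ⊔ SimpleGraph.fromEdgeSet {s(u, v)}).dist w x =
           (G ⊔ SimpleGraph.fromEdgeSet {s(u, v)}).dist w y)
    (P : G.Walk w x) (hP : P.IsPath) (hPlen : P.length = G.dist w x)
    (hw' : w' ∈ P.support)
    (Q : (G ⊔ SimpleGraph.fromEdgeSet {s(u, v)}).Walk w' y) (hQ : Q.IsPath)
    (hQlen : Q.length = (G ⊔ SimpleGraph.fromEdgeSet {s(u, v)}).dist w' y)
    (hQe : s(u, v) ∉ Q.edges) :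
    (G ⊔ SimpleGraph.fromEdgeSet {s(u, v)}).dist w' x ≠
      (G ⊔ SimpleGraph.fromEdgeSet {s(u, v)}).dist w' y :=
  resolves_of_geodesic_avoiding_newEdge_general G u v w x y w' hlt P hPlen hw' Q hQlen hQe
end

section
/- For every integer k ≥ 3, there exist a finite connected simple graph G and nonadjacent vertices u, v of G such that the metric dimension of G is at most k and the metric dimension of G + uv is at least 2^{k−1} − 2. -/
namespace AddEdgeConstr


open SimpleGraph

variable {V : Type*}

/-- BFS certificate: build a walk of length `f x` from `w` to each `x`. -/
lemma bfs_walk (G : SimpleGraph V) (w : V) (f : V → ℕ)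
    (hz : ∀ x, f x = 0 → x = w)
    (hstep : ∀ x, f x ≠ 0 → ∃ y, G.Adj y x ∧ f y + 1 = f x) :
    ∀ x, ∃ p : G.Walk w x, p.length = f x := by
  suffices H : ∀ n x, f x = n → ∃ p : G.Walk w x, p.length = f x by
    exact fun x => H (f x) x rfl
  intro n
  induction n using Nat.strong_induction_on with
  | _ n ih =>
    intro x hfx
    rcases Nat.eq_zero_or_pos n with h | h
    · subst h
      obtain rfl := hz x hfx
      exact ⟨SimpleGraph.Walk.nil, by simpa using hfx.symm⟩
    · obtain ⟨y, hadj, hy⟩ := hstep x (by omega)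
      obtain ⟨p, hp⟩ := ih (f y) (by omega) y rfl
      exact ⟨p.concat hadj, by rw [SimpleGraph.Walk.length_concat, hp, hy]⟩

lemma bfs_lower (G : SimpleGraph V) (f : V → ℕ)
    (hlip : ∀ x y, G.Adj x y → f y ≤ f x + 1) :
    ∀ (a b : V) (p : G.Walk a b), f b ≤ f a + p.length := by
  intro a b p
  induction p with
  | nil => simp
  | cons h p ih =>
    have := hlip _ _ h
    simp only [SimpleGraph.Walk.length_cons]
    omega

/-- BFS certificate gives exact distances and reachability. -/
lemma bfs_dist (G : SimpleGraph V) (w : V) (f : V → ℕ)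
    (h0 : f w = 0)
    (hz : ∀ x, f x = 0 → x = w)
    (hstep : ∀ x, f x ≠ 0 → ∃ y, G.Adj y x ∧ f y + 1 = f x)
    (hlip : ∀ x y, G.Adj x y → f y ≤ f x + 1) :
    ∀ x, G.Reachable w x ∧ G.dist w x = f x := by
  intro x
  obtain ⟨p, hp⟩ := bfs_walk G w f hz hstep x
  refine ⟨⟨p⟩, le_antisymm (hp ▸ SimpleGraph.dist_le p) ?_⟩
  obtain ⟨q, hq⟩ := (Reachable.exists_walk_length_eq_dist ⟨p⟩ : _)
  have := bfs_lower G f hlip w x q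
  omega


open SimpleGraph

/-- code of gadget `i`: bit `j` of `i+1`. -/
def code (i j : ℕ) : Prop := Nat.testBit (i + 1) j
instance : ∀ i j, Decidable (code i j) := fun i j => by unfold code; infer_instance

section codes
variable {t M : ℕ}

lemma two_pow_facts (ht : 2 ≤ t) : 2 ^ t = 2 * 2 ^ (t-1) ∧ 4 ≤ 2 ^ t ∧ 2 ≤ 2 ^ (t-1) := by
  have h1 : t - 1 + 1 = t := by omega
  have h2 : (2:ℕ) ^ (t-1+1) = 2 * 2 ^ (t-1) := by rw [pow_succ]; ring
  have h3 : (2:ℕ) ≤ 2 ^ (t-1) := by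
    calc (2:ℕ) = 2 ^ 1 := rfl
    _ ≤ 2 ^ (t-1) := Nat.pow_le_pow_right (by omega) (by omega)
  have h4 : 2 ^ t = 2 * 2 ^ (t-1) := by nth_rewrite 1 [← h1]; exact h2
  exact ⟨h4, by omega, h3⟩

lemma M_pos (ht : 2 ≤ t) (hM : M = 2 ^ t - 2) : 2 ≤ M := by
  obtain ⟨h1, h2, h3⟩ := two_pow_facts ht; omega

/-- every code is nonempty below `t`. -/
lemma code_nonempty (ht : 2 ≤ t) (hM : M = 2 ^ t - 2) (i : Fin M) :
    ∃ j : Fin t, code i.val j.val := by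
  by_contra h
  push_neg at h
  have hlt : i.val + 1 < 2 ^ t := by
    have := i.isLt; obtain ⟨h1, h2, h3⟩ := two_pow_facts ht; omega
  have : i.val + 1 = 0 := by
    apply Nat.eq_of_testBit_eq
    intro j
    simp only [Nat.zero_testBit]
    by_cases hj : j < t
    · have := h ⟨j, hj⟩; simpa [code] using this
    · exact Nat.testBit_lt_two_pow (lt_of_lt_of_le hlt (Nat.pow_le_pow_right (by omega) (by omega)))
  omega

/-- distinct gadgets have different codes. -/
lemma code_inj (ht : 2 ≤ t) (hM : M = 2 ^ t - 2) {i i' : Fin M} (h : i ≠ i') :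
    ∃ j : Fin t, (code i.val j.val ∧ ¬ code i'.val j.val) ∨
      (¬ code i.val j.val ∧ code i'.val j.val) := by
  by_contra hc
  push_neg at hc
  apply h
  have hlt : i.val + 1 < 2 ^ t := by
    have := i.isLt; obtain ⟨h1, h2, h3⟩ := two_pow_facts ht; omega
  have hlt' : i'.val + 1 < 2 ^ t := by
    have := i'.isLt; obtain ⟨h1, h2, h3⟩ := two_pow_facts ht; omega
  have : i.val + 1 = i'.val + 1 := by
    apply Nat.eq_of_testBit_eq
    intro j
    by_cases hj : j < t
    · have := hc ⟨j, hj⟩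
      simp only [code] at this
      by_cases h1 : Nat.testBit (i.val+1) j <;> by_cases h2 : Nat.testBit (i'.val+1) j <;>
        simp_all
    · rw [Nat.testBit_lt_two_pow (lt_of_lt_of_le hlt (Nat.pow_le_pow_right (by omega) (by omega))),
        Nat.testBit_lt_two_pow (lt_of_lt_of_le hlt' (Nat.pow_le_pow_right (by omega) (by omega)))]
  exact Fin.ext (by omega)

/-- every port is used by some gadget (the singleton code). -/
lemma code_cover (ht : 2 ≤ t) (hM : M = 2 ^ t - 2) (j : Fin t) :
    ∃ i : Fin M, ∀ j' : ℕ, code i.val j' ↔ j' = j.val := by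
  obtain ⟨h1, h2, h3⟩ := two_pow_facts ht
  have hj : 2 ^ j.val ≤ 2 ^ (t - 1) := Nat.pow_le_pow_right (by omega) (by have := j.isLt; omega)
  have hj1 : 1 ≤ 2 ^ j.val := Nat.one_le_two_pow
  refine ⟨⟨2 ^ j.val - 1, by omega⟩, fun j' => ?_⟩
  have he : 2 ^ j.val - 1 + 1 = 2 ^ j.val := by omega
  simp [code, he, Nat.testBit_two_pow, eq_comm]

end codes

abbrev Vt (t M : ℕ) := (Bool ⊕ Fin t) ⊕ (Fin M × Fin 7)
variable {t M : ℕ}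
def vu : Vt t M := .inl (.inl true)
def vv : Vt t M := .inl (.inl false)
def vP (j : Fin t) : Vt t M := .inl (.inr j)
def vC (i : Fin M) (c : Fin 7) : Vt t M := .inr (i, c)
def adj0 : Vt t M → Vt t M → Prop
  | .inl (.inl b), .inr (_, c) => b = true ∧ (c.val = 0 ∨ c.val = 3)
  | .inl (.inl b), .inl (.inr _) => b = false
  | .inl (.inr j), .inr (i, c) => (c.val = 2 ∨ c.val = 6) ∧ code i.val j.val
  | .inr (i, c), .inr (i', c') => i = i' ∧ c.val + 1 = c'.val ∧ c.val ≠ 2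
  | _, _ => False
def G (t M : ℕ) : SimpleGraph (Vt t M) where
  Adj x y := adj0 x y ∨ adj0 y x
  symm := ⟨fun x y h => h.symm⟩
  loopless := ⟨by intro x; rcases x with (b | j) | ⟨i, c⟩ <;> simp [adj0]⟩

def HH (t M : ℕ) : SimpleGraph (Vt t M) where
  Adj x y := (G t M).Adj x y ∨ (x = vu ∧ y = vv) ∨ (x = vv ∧ y = vu)
  symm := ⟨by intro x y h; tauto⟩
  loopless := ⟨by
    intro x
    simp only [(G t M).loopless.irrefl x, false_or]
    rintro (⟨rfl, h⟩ | ⟨rfl, h⟩) <;> simp [vu, vv] at h⟩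

lemma HH_eq (t M : ℕ) : HH t M = G t M ⊔ SimpleGraph.fromEdgeSet {s(vu, vv)} := by
  ext x y
  simp only [HH, fromEdgeSet_adj, Set.mem_singleton_iff, sup_adj, Sym2.eq_iff]
  constructor
  · rintro (h | ⟨rfl, rfl⟩ | ⟨rfl, rfl⟩)
    · exact Or.inl h
    · exact Or.inr ⟨Or.inl ⟨rfl, rfl⟩, by simp [vu, vv]⟩
    · exact Or.inr ⟨Or.inr ⟨rfl, rfl⟩, by simp [vu, vv]⟩
  · rintro (h | ⟨(⟨rfl, rfl⟩ | ⟨rfl, rfl⟩), hne⟩)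
    · exact Or.inl h
    · exact Or.inr (Or.inl ⟨rfl, rfl⟩)
    · exact Or.inr (Or.inr ⟨rfl, rfl⟩)

-- tables
def c0 (n : ℕ) : ℕ := if n = 0 then 1 else if n = 1 then 2 else if n = 2 then 3
  else if n = 3 then 1 else if n = 4 then 2 else if n = 5 then 3 else 4
def cin (n : ℕ) : ℕ := if n = 0 then 3 else if n = 1 then 2 else if n = 2 then 1
  else if n = 3 then 4 else if n = 4 then 3 else if n = 5 then 2 else 1
def cout (n : ℕ) : ℕ := if n = 0 then 5 else if n = 1 then 4 else if n = 2 then 3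
  else if n = 3 then 5 else if n = 4 then 5 else if n = 5 then 4 else 3

def f0 : Vt t M → ℕ
  | .inl (.inl true) => 0
  | .inl (.inl false) => 5
  | .inl (.inr _) => 4
  | .inr (_, c) => c0 c.val

def fP (j : Fin t) : Vt t M → ℕ
  | .inl (.inl true) => 4
  | .inl (.inl false) => 1
  | .inl (.inr j') => if j' = j then 0 else 2
  | .inr (i, c) => if code i.val j.val then cin c.val else cout c.val

-- adjacency helpers
lemma adj_uC (i : Fin M) (c : Fin 7) (h : c.val = 0 ∨ c.val = 3) :
    (G t M).Adj vu (vC i c) := Or.inl (by simp only [vu, vC, adj0]; exact ⟨trivial, h⟩)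
lemma adj_vP (j : Fin t) : (G t M).Adj vv (vP j) :=
  Or.inl (by simp only [vv, vP, adj0])
lemma adj_PC (j : Fin t) (i : Fin M) (c : Fin 7) (h : c.val = 2 ∨ c.val = 6)
    (hc : code i.val j.val) : (G t M).Adj (vP j) (vC i c) :=
  Or.inl (by simp only [vP, vC, adj0]; exact ⟨h, hc⟩)
lemma adj_CC (i : Fin M) (c c' : Fin 7) (h1 : c.val + 1 = c'.val) (h2 : c.val ≠ 2) :
    (G t M).Adj (vC i c) (vC i c') :=
  Or.inl (by simp only [vC, adj0]; exact ⟨trivial, h1, h2⟩)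

-- Lipschitz property for f0
lemma f0_lip1 : ∀ x y : Vt t M, adj0 x y → (f0 x ≤ f0 y + 1 ∧ f0 y ≤ f0 x + 1) := by
  rintro ((bx | jx) | ⟨i, c⟩) ((by' | jy) | ⟨i', c'⟩) h <;>
      simp only [adj0] at h
  · obtain rfl := h
    simp [f0]
  · obtain ⟨rfl, hc⟩ := h
    obtain ⟨cv, hcv⟩ := c'
    simp only [f0, c0] at *
    rcases hc with hc | hc <;> subst hc <;> simp
  · obtain ⟨hc, _⟩ := h
    obtain ⟨cv, hcv⟩ := c'
    simp only [f0, c0] at *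
    rcases hc with hc | hc <;> subst hc <;> simp
  · obtain ⟨rfl, h1, h2⟩ := h
    obtain ⟨cv, hcv⟩ := c
    obtain ⟨cv', hcv'⟩ := c'
    simp only [f0, c0] at *
    split_ifs <;> omega


-- Lipschitz property for fP
lemma fP_lip1 (j : Fin t) :
    ∀ x y : Vt t M, adj0 x y → (fP j x ≤ fP j y + 1 ∧ fP j y ≤ fP j x + 1) := by
  rintro ((bx | jx) | ⟨i, c⟩) ((by' | jy) | ⟨i', c'⟩) h <;>
      simp only [adj0] at h
  · obtain rfl := h
    simp only [fP]
    split_ifs <;> omega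
  · obtain ⟨rfl, hc⟩ := h
    obtain ⟨cv, hcv⟩ := c'
    by_cases hcode : code i'.val j.val
    · simp only [fP, if_pos hcode, cin, cout]
      rcases hc with hc | hc <;> subst hc <;> simp
    · simp only [fP, if_neg hcode, cin, cout]
      rcases hc with hc | hc <;> subst hc <;> simp
  · obtain ⟨hc, hcode⟩ := h
    by_cases hj : jx = j
    · subst hj
      obtain ⟨cv, hcv⟩ := c'
      simp only [fP, if_pos rfl, if_pos hcode, cin, cout]
      rcases hc with hc | hc <;> subst hc <;> simp
    · obtain ⟨cv, hcv⟩ := c'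
      by_cases hcode2 : code i'.val j.val
      · simp only [fP, if_neg hj, if_pos hcode2, cin, cout]
        rcases hc with hc | hc <;> subst hc <;> simp
      · simp only [fP, if_neg hj, if_neg hcode2, cin, cout]
        rcases hc with hc | hc <;> subst hc <;> simp
  · obtain ⟨rfl, h1, h2⟩ := h
    obtain ⟨cv, hcv⟩ := c
    obtain ⟨cv', hcv'⟩ := c'
    simp only [Fin.val_mk] at h1 h2
    by_cases hcode : code i.val j.val
    · simp only [fP, if_pos hcode, cin, cout]
      interval_cases cv <;> interval_cases cv' <;> first | omega | norm_num
    · simp only [fP, if_neg hcode, cin, cout]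
      interval_cases cv <;> interval_cases cv' <;> first | omega | norm_num

-- zero conditions
lemma f0_hz : ∀ x : Vt t M, f0 x = 0 → x = vu := by
  rintro ((b | j) | ⟨i, c⟩) h
  · cases b
    · simp [f0] at h
    · rfl
  · simp [f0] at h
  · obtain ⟨cv, hcv⟩ := c
    simp only [f0, c0] at h
    split_ifs at h <;> omega

lemma fP_hz (j : Fin t) : ∀ x : Vt t M, fP j x = 0 → x = vP j := by
  rintro ((b | j') | ⟨i, c⟩) h
  · cases b <;> simp [fP] at h
  · simp only [fP] at h
    split_ifs at h with h1
    case pos => subst h1; rfl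
    all_goals omega
  · obtain ⟨cv, hcv⟩ := c
    simp only [fP, cin, cout] at h
    split_ifs at h <;> omega


-- step lemmas
lemma f0_hstep (ht : 2 ≤ t) (hM : M = 2 ^ t - 2) :
    ∀ x : Vt t M, f0 x ≠ 0 → ∃ y, (G t M).Adj y x ∧ f0 y + 1 = f0 x := by
  rintro ((b | j) | ⟨i, c⟩) h
  · cases b
    · exact ⟨vP ⟨0, by omega⟩, (adj_vP _).symm, by simp [f0, vP]⟩
    · exact absurd rfl h
  · obtain ⟨i, hi⟩ := code_cover ht hM j
    exact ⟨vC i ⟨2, by omega⟩, (adj_PC j i _ (Or.inl rfl) ((hi j.val).mpr rfl)).symm,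
      by simp only [f0, vC, vu, vP]; decide⟩
  · obtain ⟨cv, hcv⟩ := c
    interval_cases cv
    · exact ⟨vu, adj_uC i _ (Or.inl rfl), by simp only [f0, vu, vC]; decide⟩
    · exact ⟨vC i ⟨0, by omega⟩, adj_CC i _ _ rfl (by simp), by simp only [f0, vC, vu, vP]; decide⟩
    · exact ⟨vC i ⟨1, by omega⟩, adj_CC i _ _ rfl (by simp), by simp only [f0, vC, vu, vP]; decide⟩
    · exact ⟨vu, adj_uC i _ (Or.inr rfl), by simp only [f0, vu, vC]; decide⟩
    · exact ⟨vC i ⟨3, by omega⟩, adj_CC i _ _ rfl (by simp), by simp only [f0, vC, vu, vP]; decide⟩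
    · exact ⟨vC i ⟨4, by omega⟩, adj_CC i _ _ rfl (by simp), by simp only [f0, vC, vu, vP]; decide⟩
    · exact ⟨vC i ⟨5, by omega⟩, adj_CC i _ _ rfl (by simp), by simp only [f0, vC, vu, vP]; decide⟩

lemma fP_hstep (ht : 2 ≤ t) (hM : M = 2 ^ t - 2) (j : Fin t) :
    ∀ x : Vt t M, fP j x ≠ 0 → ∃ y, (G t M).Adj y x ∧ fP j y + 1 = fP j x := by
  rintro ((b | j') | ⟨i, c⟩) h
  · cases b
    · exact ⟨vP j, (adj_vP _).symm, by simp [fP, vP]⟩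
    · obtain ⟨i, hi⟩ := code_cover ht hM j
      exact ⟨vC i ⟨0, by omega⟩, (adj_uC i _ (Or.inl rfl)).symm,
        by simp only [fP, vC, vu, if_pos ((hi j.val).mpr rfl)]; decide⟩
  · by_cases hj : j' = j
    · subst hj
      simp [fP] at h
    · exact ⟨vv, adj_vP j', by simp [fP, vv, if_neg hj]⟩
  · by_cases hcode : code i.val j.val
    · obtain ⟨cv, hcv⟩ := c
      interval_cases cv
      · exact ⟨vC i ⟨1, by omega⟩, (adj_CC i _ _ rfl (by simp)).symm,
          by simp only [fP, vC, if_pos hcode]; decide⟩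
      · exact ⟨vC i ⟨2, by omega⟩, (adj_CC i _ _ rfl (by simp)).symm,
          by simp only [fP, vC, if_pos hcode]; decide⟩
      · exact ⟨vP j, adj_PC j i _ (Or.inl rfl) hcode, by simp only [fP, vC, vP, if_pos hcode]; simp [cin]⟩
      · exact ⟨vC i ⟨4, by omega⟩, (adj_CC i _ _ rfl (by simp)).symm,
          by simp only [fP, vC, if_pos hcode]; decide⟩
      · exact ⟨vC i ⟨5, by omega⟩, (adj_CC i _ _ rfl (by simp)).symm,
          by simp only [fP, vC, if_pos hcode]; decide⟩
      · exact ⟨vC i ⟨6, by omega⟩, (adj_CC i _ _ rfl (by simp)).symm,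
          by simp only [fP, vC, if_pos hcode]; decide⟩
      · exact ⟨vP j, adj_PC j i _ (Or.inr rfl) hcode, by simp only [fP, vC, vP, if_pos hcode]; simp [cin]⟩
    · obtain ⟨j'', hj''⟩ := code_nonempty ht hM i
      have hne : j'' ≠ j := by rintro rfl; exact hcode hj''
      obtain ⟨cv, hcv⟩ := c
      interval_cases cv
      · exact ⟨vu, adj_uC i _ (Or.inl rfl), by simp only [fP, vC, vu, if_neg hcode]; decide⟩
      · exact ⟨vC i ⟨2, by omega⟩, (adj_CC i _ _ rfl (by simp)).symm,
          by simp only [fP, vC, if_neg hcode]; decide⟩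
      · exact ⟨vP j'', adj_PC j'' i _ (Or.inl rfl) hj'',
          by simp only [fP, vC, vP, if_neg hcode, if_neg hne]; decide⟩
      · exact ⟨vu, adj_uC i _ (Or.inr rfl), by simp only [fP, vC, vu, if_neg hcode]; decide⟩
      · exact ⟨vC i ⟨5, by omega⟩, (adj_CC i _ _ rfl (by simp)).symm,
          by simp only [fP, vC, if_neg hcode]; decide⟩
      · exact ⟨vC i ⟨6, by omega⟩, (adj_CC i _ _ rfl (by simp)).symm,
          by simp only [fP, vC, if_neg hcode]; decide⟩
      · exact ⟨vP j'', adj_PC j'' i _ (Or.inr rfl) hj'',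
          by simp only [fP, vC, vP, if_neg hcode, if_neg hne]; decide⟩

-- distance formulas in G
lemma f0_dist (ht : 2 ≤ t) (hM : M = 2 ^ t - 2) :
    ∀ x : Vt t M, (G t M).Reachable vu x ∧ (G t M).dist vu x = f0 x :=
  bfs_dist _ _ _ rfl f0_hz (f0_hstep ht hM)
    (fun x y a => a.elim (fun h' => (f0_lip1 x y h').2) (fun h' => (f0_lip1 y x h').1))

lemma fP_dist (ht : 2 ≤ t) (hM : M = 2 ^ t - 2) (j : Fin t) :
    ∀ x : Vt t M, (G t M).dist (vP j) x = fP j x :=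
  fun x => (bfs_dist _ _ _ (by simp [fP, vP]) (fP_hz j) (fP_hstep ht hM j)
    (fun x y a => a.elim (fun h' => (fP_lip1 j x y h').2) (fun h' => (fP_lip1 j y x h').1)) x).2

-- tables for distances in H = G + uv
def ta (n : ℕ) : ℕ := if n = 0 then 0 else if n = 1 then 1 else if n = 2 then 2
  else if n = 3 then 2 else if n = 4 then 3 else 4
def tb (n : ℕ) : ℕ := if n = 0 then 2 else if n = 1 then 3 else if n = 2 then 4
  else if n = 3 then 0 else if n = 4 then 1 else if n = 5 then 2 else 3
def tov (n : ℕ) : ℕ := if n = 0 then 2 else if n = 1 then 3 else if n = 2 then 4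
  else if n = 3 then 2 else if n = 4 then 3 else 4

def ga (i0 : Fin M) : Vt t M → ℕ
  | .inl (.inl true) => 1
  | .inl (.inl false) => 2
  | .inl (.inr _) => 3
  | .inr (i, c) => if i = i0 then ta c.val else tov c.val

def gb (i0 : Fin M) : Vt t M → ℕ
  | .inl (.inl true) => 1
  | .inl (.inl false) => 2
  | .inl (.inr _) => 3
  | .inr (i, c) => if i = i0 then tb c.val else tov c.val

lemma ga_lip1 (i0 : Fin M) :
    ∀ x y : Vt t M, adj0 x y → (ga i0 x ≤ ga i0 y + 1 ∧ ga i0 y ≤ ga i0 x + 1) := by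
  rintro ((bx | jx) | ⟨i, c⟩) ((by' | jy) | ⟨i', c'⟩) h <;>
      simp only [adj0] at h
  · obtain rfl := h
    simp only [ga]
    omega
  · obtain ⟨rfl, hc⟩ := h
    obtain ⟨cv, hcv⟩ := c'
    by_cases hi : i' = i0
    · simp only [ga, if_pos hi, ta]
      rcases hc with hc | hc <;> subst hc <;> simp
    · simp only [ga, if_neg hi, tov]
      rcases hc with hc | hc <;> subst hc <;> simp
  · obtain ⟨hc, _⟩ := h
    obtain ⟨cv, hcv⟩ := c'
    by_cases hi : i' = i0
    · simp only [ga, if_pos hi, ta]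
      rcases hc with hc | hc <;> subst hc <;> simp
    · simp only [ga, if_neg hi, tov]
      rcases hc with hc | hc <;> subst hc <;> simp
  · obtain ⟨rfl, h1, h2⟩ := h
    obtain ⟨cv, hcv⟩ := c
    obtain ⟨cv', hcv'⟩ := c'
    simp only [Fin.val_mk] at h1 h2
    by_cases hi : i = i0
    · simp only [ga, if_pos hi, ta]
      interval_cases cv <;> interval_cases cv' <;> first | omega | norm_num
    · simp only [ga, if_neg hi, tov]
      interval_cases cv <;> interval_cases cv' <;> first | omega | norm_num

lemma gb_lip1 (i0 : Fin M) :
    ∀ x y : Vt t M, adj0 x y → (gb i0 x ≤ gb i0 y + 1 ∧ gb i0 y ≤ gb i0 x + 1) := by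
  rintro ((bx | jx) | ⟨i, c⟩) ((by' | jy) | ⟨i', c'⟩) h <;>
      simp only [adj0] at h
  · obtain rfl := h
    simp only [gb]
    omega
  · obtain ⟨rfl, hc⟩ := h
    obtain ⟨cv, hcv⟩ := c'
    by_cases hi : i' = i0
    · simp only [gb, if_pos hi, tb]
      rcases hc with hc | hc <;> subst hc <;> simp
    · simp only [gb, if_neg hi, tov]
      rcases hc with hc | hc <;> subst hc <;> simp
  · obtain ⟨hc, _⟩ := h
    obtain ⟨cv, hcv⟩ := c'
    by_cases hi : i' = i0
    · simp only [gb, if_pos hi, tb]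
      rcases hc with hc | hc <;> subst hc <;> simp
    · simp only [gb, if_neg hi, tov]
      rcases hc with hc | hc <;> subst hc <;> simp
  · obtain ⟨rfl, h1, h2⟩ := h
    obtain ⟨cv, hcv⟩ := c
    obtain ⟨cv', hcv'⟩ := c'
    simp only [Fin.val_mk] at h1 h2
    by_cases hi : i = i0
    · simp only [gb, if_pos hi, tb]
      interval_cases cv <;> interval_cases cv' <;> first | omega | norm_num
    · simp only [gb, if_neg hi, tov]
      interval_cases cv <;> interval_cases cv' <;> first | omega | norm_num

lemma ga_hz (i0 : Fin M) : ∀ x : Vt t M, ga i0 x = 0 → x = vC i0 ⟨0, by omega⟩ := by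
  rintro ((b | j) | ⟨i, c⟩) h
  · cases b <;> simp [ga] at h
  · simp [ga] at h
  · obtain ⟨cv, hcv⟩ := c
    by_cases hi : i = i0
    · subst hi
      simp only [ga, if_pos rfl, ta] at h
      split_ifs at h <;> simp_all [vC]
    · simp only [ga, if_neg hi, tov] at h
      split_ifs at h <;> omega

lemma gb_hz (i0 : Fin M) : ∀ x : Vt t M, gb i0 x = 0 → x = vC i0 ⟨3, by omega⟩ := by
  rintro ((b | j) | ⟨i, c⟩) h
  · cases b <;> simp [gb] at h
  · simp [gb] at h
  · obtain ⟨cv, hcv⟩ := c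
    by_cases hi : i = i0
    · subst hi
      simp only [gb, if_pos rfl, tb] at h
      split_ifs at h <;> simp_all [vC]
    · simp only [gb, if_neg hi, tov] at h
      split_ifs at h <;> omega

-- adjacency in HH
lemma hadj_of_g {x y : Vt t M} (h : (G t M).Adj x y) : (HH t M).Adj x y := Or.inl h
lemma hadj_uv : (HH t M).Adj vu vv := Or.inr (Or.inl ⟨rfl, rfl⟩)

lemma ga_hstep (ht : 2 ≤ t) (hM : M = 2 ^ t - 2) (i0 : Fin M) :
    ∀ x : Vt t M, ga i0 x ≠ 0 → ∃ y, (HH t M).Adj y x ∧ ga i0 y + 1 = ga i0 x := by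
  rintro ((b | j) | ⟨i, c⟩) h
  · cases b
    · exact ⟨vu, hadj_uv, by simp [ga, vu, vv]⟩
    · exact ⟨vC i0 ⟨0, by omega⟩, hadj_of_g ((adj_uC i0 _ (Or.inl rfl)).symm),
        by simp [ga, vu, vC, ta]⟩
  · exact ⟨vv, hadj_of_g (adj_vP j), by simp [ga, vv]⟩
  · by_cases hi : i = i0
    · subst hi
      obtain ⟨cv, hcv⟩ := c
      interval_cases cv
      · simp [ga, vC, ta] at h
      · exact ⟨vC i ⟨0, by omega⟩, hadj_of_g (adj_CC i _ _ rfl (by simp)),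
          by simp only [ga, vC, if_pos rfl]; decide⟩
      · exact ⟨vC i ⟨1, by omega⟩, hadj_of_g (adj_CC i _ _ rfl (by simp)),
          by simp only [ga, vC, if_pos rfl]; decide⟩
      · exact ⟨vu, hadj_of_g (adj_uC i _ (Or.inr rfl)),
          by simp only [ga, vu, vC, if_pos rfl]; decide⟩
      · exact ⟨vC i ⟨3, by omega⟩, hadj_of_g (adj_CC i _ _ rfl (by simp)),
          by simp only [ga, vC, if_pos rfl]; decide⟩
      · exact ⟨vC i ⟨4, by omega⟩, hadj_of_g (adj_CC i _ _ rfl (by simp)),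
          by simp only [ga, vC, if_pos rfl]; decide⟩
      · obtain ⟨j'', hj''⟩ := code_nonempty ht hM i
        exact ⟨vP j'', hadj_of_g (adj_PC j'' i _ (Or.inr rfl) hj''),
          by simp only [ga, vP, vC, if_pos rfl]; decide⟩
    · obtain ⟨cv, hcv⟩ := c
      interval_cases cv
      · exact ⟨vu, hadj_of_g (adj_uC i _ (Or.inl rfl)),
          by simp only [ga, vu, vC, if_neg hi]; decide⟩
      · exact ⟨vC i ⟨0, by omega⟩, hadj_of_g (adj_CC i _ _ rfl (by simp)),
          by simp only [ga, vC, if_neg hi]; decide⟩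
      · exact ⟨vC i ⟨1, by omega⟩, hadj_of_g (adj_CC i _ _ rfl (by simp)),
          by simp only [ga, vC, if_neg hi]; decide⟩
      · exact ⟨vu, hadj_of_g (adj_uC i _ (Or.inr rfl)),
          by simp only [ga, vu, vC, if_neg hi]; decide⟩
      · exact ⟨vC i ⟨3, by omega⟩, hadj_of_g (adj_CC i _ _ rfl (by simp)),
          by simp only [ga, vC, if_neg hi]; decide⟩
      · exact ⟨vC i ⟨4, by omega⟩, hadj_of_g (adj_CC i _ _ rfl (by simp)),
          by simp only [ga, vC, if_neg hi]; decide⟩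
      · obtain ⟨j'', hj''⟩ := code_nonempty ht hM i
        exact ⟨vP j'', hadj_of_g (adj_PC j'' i _ (Or.inr rfl) hj''),
          by simp only [ga, vP, vC, if_neg hi]; decide⟩

lemma gb_hstep (ht : 2 ≤ t) (hM : M = 2 ^ t - 2) (i0 : Fin M) :
    ∀ x : Vt t M, gb i0 x ≠ 0 → ∃ y, (HH t M).Adj y x ∧ gb i0 y + 1 = gb i0 x := by
  rintro ((b | j) | ⟨i, c⟩) h
  · cases b
    · exact ⟨vu, hadj_uv, by simp [gb, vu, vv]⟩
    · exact ⟨vC i0 ⟨3, by omega⟩, hadj_of_g ((adj_uC i0 _ (Or.inr rfl)).symm),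
        by simp only [gb, vu, vC, if_pos rfl]; decide⟩
  · exact ⟨vv, hadj_of_g (adj_vP j), by simp [gb, vv]⟩
  · by_cases hi : i = i0
    · subst hi
      obtain ⟨cv, hcv⟩ := c
      interval_cases cv
      · exact ⟨vu, hadj_of_g (adj_uC i _ (Or.inl rfl)),
          by simp only [gb, vu, vC, if_pos rfl]; decide⟩
      · exact ⟨vC i ⟨0, by omega⟩, hadj_of_g (adj_CC i _ _ rfl (by simp)),
          by simp only [gb, vC, if_pos rfl]; decide⟩
      · exact ⟨vC i ⟨1, by omega⟩, hadj_of_g (adj_CC i _ _ rfl (by simp)),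
          by simp only [gb, vC, if_pos rfl]; decide⟩
      · simp [gb, vC, tb] at h
      · exact ⟨vC i ⟨3, by omega⟩, hadj_of_g (adj_CC i _ _ rfl (by simp)),
          by simp only [gb, vC, if_pos rfl]; decide⟩
      · exact ⟨vC i ⟨4, by omega⟩, hadj_of_g (adj_CC i _ _ rfl (by simp)),
          by simp only [gb, vC, if_pos rfl]; decide⟩
      · exact ⟨vC i ⟨5, by omega⟩, hadj_of_g (adj_CC i _ _ rfl (by simp)),
          by simp only [gb, vC, if_pos rfl]; decide⟩
    · obtain ⟨cv, hcv⟩ := c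
      interval_cases cv
      · exact ⟨vu, hadj_of_g (adj_uC i _ (Or.inl rfl)),
          by simp only [gb, vu, vC, if_neg hi]; decide⟩
      · exact ⟨vC i ⟨0, by omega⟩, hadj_of_g (adj_CC i _ _ rfl (by simp)),
          by simp only [gb, vC, if_neg hi]; decide⟩
      · exact ⟨vC i ⟨1, by omega⟩, hadj_of_g (adj_CC i _ _ rfl (by simp)),
          by simp only [gb, vC, if_neg hi]; decide⟩
      · exact ⟨vu, hadj_of_g (adj_uC i _ (Or.inr rfl)),
          by simp only [gb, vu, vC, if_neg hi]; decide⟩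
      · exact ⟨vC i ⟨3, by omega⟩, hadj_of_g (adj_CC i _ _ rfl (by simp)),
          by simp only [gb, vC, if_neg hi]; decide⟩
      · exact ⟨vC i ⟨4, by omega⟩, hadj_of_g (adj_CC i _ _ rfl (by simp)),
          by simp only [gb, vC, if_neg hi]; decide⟩
      · obtain ⟨j'', hj''⟩ := code_nonempty ht hM i
        exact ⟨vP j'', hadj_of_g (adj_PC j'' i _ (Or.inr rfl) hj''),
          by simp only [gb, vP, vC, if_neg hi]; decide⟩

lemma ga_dist (ht : 2 ≤ t) (hM : M = 2 ^ t - 2) (i0 : Fin M) :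
    ∀ x : Vt t M, (HH t M).dist (vC i0 ⟨0, by omega⟩) x = ga i0 x := by
  have hlip : ∀ x y, (HH t M).Adj x y → ga i0 y ≤ ga i0 x + 1 := by
    rintro x y (h | ⟨rfl, rfl⟩ | ⟨rfl, rfl⟩)
    · exact h.elim (fun h' => (ga_lip1 i0 x y h').2) (fun h' => (ga_lip1 i0 y x h').1)
    · simp [ga, vu, vv]
    · simp [ga, vu, vv]
  exact fun x => (bfs_dist _ _ _ (by simp [ga, vC, ta]) (ga_hz i0) (ga_hstep ht hM i0) hlip x).2

lemma gb_dist (ht : 2 ≤ t) (hM : M = 2 ^ t - 2) (i0 : Fin M) :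
    ∀ x : Vt t M, (HH t M).dist (vC i0 ⟨3, by omega⟩) x = gb i0 x := by
  have hlip : ∀ x y, (HH t M).Adj x y → gb i0 y ≤ gb i0 x + 1 := by
    rintro x y (h | ⟨rfl, rfl⟩ | ⟨rfl, rfl⟩)
    · exact h.elim (fun h' => (gb_lip1 i0 x y h').2) (fun h' => (gb_lip1 i0 y x h').1)
    · simp [gb, vu, vv]
    · simp [gb, vu, vv]
  exact fun x => (bfs_dist _ _ _ (by simp only [gb, vC, if_pos rfl]; decide) (gb_hz i0) (gb_hstep ht hM i0) hlip x).2

-- helper value lemmas (decidable)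
lemma c0_ge : ∀ n : ℕ, 1 ≤ c0 n := by intro n; unfold c0; split_ifs <;> omega
lemma c0_le : ∀ n : ℕ, c0 n ≤ 4 := by intro n; unfold c0; split_ifs <;> omega
lemma cin_ge : ∀ n : ℕ, 1 ≤ cin n := by intro n; unfold cin; split_ifs <;> omega
lemma cout_ge : ∀ n : ℕ, 1 ≤ cout n := by intro n; unfold cout; split_ifs <;> omega
lemma sep1 : ∀ a b : Fin 7, c0 a.val = c0 b.val → a ≠ b → cin a.val ≠ cin b.val := by decide
lemma sep2 : ∀ a b : Fin 7, c0 a.val = c0 b.val → cin a.val ≠ cout b.val := by decide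

-- the signature from the landmarks determines the vertex
lemma signature (ht : 2 ≤ t) (hM : M = 2 ^ t - 2) (x y : Vt t M) (hxy : x ≠ y)
    (h0 : f0 x = f0 y) : ∃ j : Fin t, fP j x ≠ fP j y := by
  rcases x with (bx | jx) | ⟨i, c⟩ <;> rcases y with (by' | jy) | ⟨i', c'⟩
  · cases bx <;> cases by' <;> first
      | exact absurd rfl hxy
      | simp [f0] at h0
  · cases bx <;> simp [f0] at h0
  · cases bx <;>
      (simp only [f0] at h0; have h1 := c0_ge c'.val; have h2 := c0_le c'.val; omega)
  · cases by' <;> simp [f0] at h0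
  · have hne : jx ≠ jy := by rintro rfl; exact hxy rfl
    refine ⟨jx, ?_⟩
    simp [fP, Ne.symm hne]
  · refine ⟨jx, ?_⟩
    have hx : fP jx (Sum.inl (Sum.inr jx) : Vt t M) = 0 := by simp [fP]
    rw [hx]
    simp only [fP]
    by_cases hcode : code i'.val jx.val
    · rw [if_pos hcode]; have := cin_ge c'.val; omega
    · rw [if_neg hcode]; have := cout_ge c'.val; omega
  · cases by' <;>
      (simp only [f0] at h0; have h1 := c0_ge c.val; have h2 := c0_le c.val; omega)
  · refine ⟨jy, ?_⟩
    have hy : fP jy (Sum.inl (Sum.inr jy) : Vt t M) = 0 := by simp [fP]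
    rw [hy]
    simp only [fP]
    by_cases hcode : code i.val jy.val
    · rw [if_pos hcode]; have := cin_ge c.val; omega
    · rw [if_neg hcode]; have := cout_ge c.val; omega
  · simp only [f0] at h0
    by_cases hi : i = i'
    · subst hi
      have hcc : c ≠ c' := by rintro rfl; exact hxy rfl
      obtain ⟨j, hj⟩ := code_nonempty ht hM i
      refine ⟨j, ?_⟩
      simp only [fP, if_pos hj]
      exact sep1 c c' h0 hcc
    · obtain ⟨j, hj⟩ := code_inj ht hM hi
      rcases hj with ⟨h1, h2⟩ | ⟨h1, h2⟩
      · refine ⟨j, ?_⟩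
        simp only [fP, if_pos h1, if_neg h2]
        exact sep2 c c' h0
      · refine ⟨j, ?_⟩
        simp only [fP, if_neg h1, if_pos h2]
        exact fun he => sep2 c' c h0.symm he.symm

lemma resolvingG (ht : 2 ≤ t) (hM : M = 2 ^ t - 2) :
    IsResolving (G t M) (insert vu (Set.range (vP : Fin t → Vt t M))) := by
  intro x y hxy
  by_cases h0 : f0 x = f0 y
  · obtain ⟨j, hj⟩ := signature ht hM x y hxy h0
    exact ⟨vP j, Set.mem_insert_of_mem _ ⟨j, rfl⟩,
      by rw [fP_dist ht hM j x, fP_dist ht hM j y]; exact hj⟩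
  · exact ⟨vu, Set.mem_insert _ _,
      by rw [(f0_dist ht hM x).2, (f0_dist ht hM y).2]; exact h0⟩

lemma G_connected (ht : 2 ≤ t) (hM : M = 2 ^ t - 2) : (G t M).Connected := by
  rw [connected_iff]
  exact ⟨fun a b => ((f0_dist ht hM a).1.symm).trans (f0_dist ht hM b).1, ⟨vu⟩⟩

lemma vu_ne_vv : (vu : Vt t M) ≠ vv := by simp [vu, vv]

lemma not_adj_uv : ¬ (G t M).Adj vu vv := by
  rintro (h | h) <;> simp [adj0, vu, vv] at h

-- vertices outside gadget i0 do not separate the pair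
lemma outside_eq (i0 : Fin M) (x : Vt t M) (hx : ∀ c, x ≠ vC i0 c) :
    ga i0 x = gb i0 x := by
  rcases x with (b | j) | ⟨i, c⟩
  · cases b <;> rfl
  · rfl
  · have hi : i ≠ i0 := by rintro rfl; exact hx c rfl
    simp only [ga, gb, if_neg hi]

-- lower bound: any resolving set of HH has at least M elements
lemma lower_bound (ht : 2 ≤ t) (hM : M = 2 ^ t - 2) (W : Set (Vt t M))
    (hW : IsResolving (HH t M) W) : (M : ℕ∞) ≤ W.encard := by
  have key : ∀ i : Fin M, ∃ w, w ∈ W ∧ ∃ c, w = vC i c := by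
    intro i
    obtain ⟨w, hwW, hwd⟩ := hW (vC i ⟨0, by omega⟩) (vC i ⟨3, by omega⟩) (by simp [vC])
    refine ⟨w, hwW, ?_⟩
    by_contra hnc
    push_neg at hnc
    apply hwd
    rw [SimpleGraph.dist_comm, ga_dist ht hM i w, SimpleGraph.dist_comm,
      gb_dist ht hM i w]
    exact outside_eq i w hnc
  choose g hgW hgC using key
  have hinj : Function.Injective g := by
    intro a b hab
    obtain ⟨ca, hca⟩ := hgC a
    obtain ⟨cb, hcb⟩ := hgC b
    rw [hca, hcb] at hab
    exact (by simpa [vC, Prod.ext_iff] using (hab : _) : a = b ∧ ca = cb).1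
  calc (M : ℕ∞) = (Set.univ : Set (Fin M)).encard := by
        rw [Set.encard_univ, ENat.card_eq_coe_fintype_card, Fintype.card_fin]
    _ = (g '' Set.univ).encard := (hinj.encard_image _).symm
    _ ≤ W.encard := Set.encard_mono (by rintro _ ⟨a, -, rfl⟩; exact hgW a)

-- transport of distances along an isomorphism
lemma iso_dist_le {α β : Type*} {A : SimpleGraph α} {B : SimpleGraph β}
    (φ : A ≃g B) (x y : α) : B.dist (φ x) (φ y) ≤ A.dist x y := by
  by_cases hr : A.Reachable x y
  · obtain ⟨p, hp⟩ := hr.exists_walk_length_eq_dist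
    calc B.dist (φ x) (φ y) ≤ (p.map φ.toHom).length := SimpleGraph.dist_le _
      _ = p.length := SimpleGraph.Walk.length_map _ _
      _ = A.dist x y := hp
  · rw [SimpleGraph.dist_eq_zero_of_not_reachable hr,
      SimpleGraph.dist_eq_zero_of_not_reachable]
    intro hR
    apply hr
    have := hR.map φ.symm.toHom
    simpa using this

lemma iso_dist {α β : Type*} {A : SimpleGraph α} {B : SimpleGraph β}
    (φ : A ≃g B) (x y : α) : B.dist (φ x) (φ y) = A.dist x y := by
  refine le_antisymm (iso_dist_le φ x y) ?_
  have := iso_dist_le φ.symm (φ x) (φ y)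
  simpa using this

lemma vP_inj : Function.Injective (vP : Fin t → Vt t M) := by
  intro a b h
  simpa [vP] using h

/-- pullback isomorphism along an equivalence. -/
def comapIso {α β : Type*} (f : α ≃ β) (B : SimpleGraph β) : B.comap ⇑f ≃g B :=
  { f with map_rel_iff' := fun {a b} => Iff.rfl }

theorem main (t M : ℕ) (ht : 2 ≤ t) (hM : M = 2 ^ t - 2) (n : ℕ) (e : Vt t M ≃ Fin n) :
    ∃ (G' : SimpleGraph (Fin n)) (u v : Fin n),
      G'.Connected ∧ u ≠ v ∧ ¬ G'.Adj u v ∧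
      metricDim G' ≤ ((t + 1 : ℕ) : ℕ∞) ∧
      ((M : ℕ) : ℕ∞) ≤ metricDim (G' ⊔ SimpleGraph.fromEdgeSet {s(u, v)}) := by
  classical
  refine ⟨(G t M).comap ⇑e.symm, e vu, e vv, ?_, ?_, ?_, ?_, ?_⟩
  · exact (SimpleGraph.Iso.connected_iff (comapIso e.symm (G t M))).mpr
      (G_connected ht hM)
  · exact fun h => vu_ne_vv (e.injective h)
  · intro h
    apply not_adj_uv (t := t) (M := M)
    simpa using h
  · -- upper bound
    set W0 : Set (Vt t M) := insert vu (Set.range (vP : Fin t → Vt t M)) with hW0def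
    have hres' : IsResolving ((G t M).comap ⇑e.symm) (e '' W0) := by
      intro x y hxy
      have hne : e.symm x ≠ e.symm y := fun h => hxy (e.symm.injective h)
      obtain ⟨w, hw, hd⟩ := resolvingG ht hM (e.symm x) (e.symm y) hne
      refine ⟨e w, Set.mem_image_of_mem _ hw, ?_⟩
      have h1 : (G t M).dist (e.symm (e w)) (e.symm x) =
          ((G t M).comap ⇑e.symm).dist (e w) x := iso_dist (comapIso e.symm (G t M)) (e w) x
      have h2 : (G t M).dist (e.symm (e w)) (e.symm y) =
          ((G t M).comap ⇑e.symm).dist (e w) y := iso_dist (comapIso e.symm (G t M)) (e w) y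
      rw [e.symm_apply_apply] at h1 h2
      rw [h1, h2] at hd
      exact hd
    have hcard : (e '' W0).encard = ((t + 1 : ℕ) : ℕ∞) := by
      rw [e.injective.encard_image]
      have hnm : vu ∉ Set.range (vP : Fin t → Vt t M) := by
        rintro ⟨j, hj⟩
        simp [vu, vP] at hj
      rw [hW0def, Set.encard_insert_of_notMem hnm, ← Set.image_univ,
        vP_inj.encard_image, Set.encard_univ, ENat.card_eq_coe_fintype_card,
        Fintype.card_fin]
      push_cast
      ring
    calc metricDim ((G t M).comap ⇑e.symm) ≤ (e '' W0).encard :=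
          sInf_le ⟨e '' W0, hres', rfl⟩
      _ = _ := hcard
  · -- lower bound
    set H' := (G t M).comap ⇑e.symm ⊔ SimpleGraph.fromEdgeSet {s(e vu, e vv)} with hH'
    have adjiff : ∀ a b : Fin n, H'.Adj a b ↔ (HH t M).Adj (e.symm a) (e.symm b) := by
      intro a b
      simp only [hH', SimpleGraph.sup_adj, SimpleGraph.fromEdgeSet_adj,
        Set.mem_singleton_iff, Sym2.eq_iff, SimpleGraph.comap_adj]
      constructor
      · rintro (h | ⟨(⟨rfl, rfl⟩ | ⟨rfl, rfl⟩), hne⟩)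
        · exact Or.inl h
        · exact Or.inr (Or.inl ⟨by simp, by simp⟩)
        · exact Or.inr (Or.inr ⟨by simp, by simp⟩)
      · rintro (h | ⟨h1, h2⟩ | ⟨h1, h2⟩)
        · exact Or.inl h
        · refine Or.inr ⟨Or.inl ⟨?_, ?_⟩, ?_⟩
          · rw [← h1, e.apply_symm_apply]
          · rw [← h2, e.apply_symm_apply]
          · intro hab
            rw [hab] at h1
            exact vu_ne_vv (h1.symm.trans h2)
        · refine Or.inr ⟨Or.inr ⟨?_, ?_⟩, ?_⟩
          · rw [← h1, e.apply_symm_apply]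
          · rw [← h2, e.apply_symm_apply]
          · intro hab
            rw [hab] at h1
            exact vu_ne_vv (h2.symm.trans h1)
    let φH : H' ≃g HH t M :=
      { toEquiv := e.symm, map_rel_iff' := fun {a b} => (adjiff a b).symm }
    refine le_sInf ?_
    rintro b ⟨W, hW, rfl⟩
    have hres'' : IsResolving (HH t M) (⇑e.symm '' W) := by
      intro x y hxy
      have hne : e x ≠ e y := fun h => hxy (e.injective h)
      obtain ⟨w, hw, hd⟩ := hW (e x) (e y) hne
      refine ⟨e.symm w, Set.mem_image_of_mem _ hw, ?_⟩
      have h1 : (HH t M).dist (e.symm w) (e.symm (e x)) = H'.dist w (e x) :=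
        iso_dist φH w (e x)
      have h2 : (HH t M).dist (e.symm w) (e.symm (e y)) = H'.dist w (e y) :=
        iso_dist φH w (e y)
      rw [e.symm_apply_apply] at h1
      rw [e.symm_apply_apply] at h2
      rw [← h1, ← h2] at hd
      exact hd
    calc ((M : ℕ) : ℕ∞) ≤ (⇑e.symm '' W).encard := lower_bound ht hM _ hres''
      _ = W.encard := e.symm.injective.encard_image _

end AddEdgeConstr

/-- For every `k ≥ 3` there exist a finite connected graph `G` and a non-edge `uv`
such that `β(G) ≤ k` and `β(G + uv) ≥ 2 ^ (k - 1) - 2`. -/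
theorem exists_addEdge_metricDim_exponential (k : ℕ) (hk : 3 ≤ k) :
    ∃ (n : ℕ) (G : SimpleGraph (Fin n)) (u v : Fin n),
      G.Connected ∧ u ≠ v ∧ ¬ G.Adj u v ∧
      metricDim G ≤ (k : ℕ∞) ∧
      ((2 ^ (k - 1) - 2 : ℕ) : ℕ∞) ≤
        metricDim (G ⊔ SimpleGraph.fromEdgeSet {s(u, v)}) := by
  classical
  set t := k - 1 with htdef
  have ht : 2 ≤ t := by omega
  set M := 2 ^ t - 2 with hMdef
  obtain ⟨G', u, v, hconn, hne, hnadj, hupper, hlower⟩ :=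
    AddEdgeConstr.main t M ht rfl (Fintype.card (AddEdgeConstr.Vt t M))
      (Fintype.equivFin _)
  refine ⟨_, G', u, v, hconn, hne, hnadj, ?_, ?_⟩
  · refine le_trans hupper ?_
    have : t + 1 = k := by omega
    rw [this]
  · exact hlower
end

section
/- For every integer k ≥ 4, there exist a finite connected simple graph G and nonadjacent vertices u, v of G such that the metric dimension of G is at most k and the metric dimension of G + uv is at least (k+1)·2^{k−2} − 1. -/
/-!
Take `K = k - 1` and the graph with vertices `u, v, h`, `c i, m i` for `i < K`, and a path
`s φ - p φ - q φ - t φ` for every `φ : Fin K → Fin 3`: `u` is joined to `h` and to all `c i, m i`,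
`c i` to `m i`, `h` to every `s φ`, `c i` (resp. `m i`) to `s φ` when `φ i = 0` (resp. `φ i = 1`),
and every `t φ` to `v`. The distance from `u` is the level of a vertex, and on each level the
distances from the `c j` determine the vertex (on the paths they read off `φ`), so `{u} ∪ {c i}`
is resolving and `β(G) ≤ K + 1 = k`.

In `G + uv` every vertex `w` off the path of `φ` has `d(w, t φ) = d(w, v) + 1`, so the `3 ^ K`
vertices `t φ` are told apart only from inside their paths; a resolving set must meet all paths
but one, whence `β(G + uv) ≥ 3 ^ K - 1 ≥ (k + 1) 2 ^ (k - 2) - 1`.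

All distances are certified by potentials: a function vanishing at `r`, changing by at most one
along edges and dropping by one along some edge at every other vertex is the distance from `r`.
-/

namespace SimpleGraph

variable {V V' : Type*} {G : SimpleGraph V} {G' : SimpleGraph V'}

theorem Hom.edist_le (f : G →g G') (a b : V) : G'.edist (f a) (f b) ≤ G.edist a b := by
  by_cases hr : G.Reachable a b
  · obtain ⟨p, hp⟩ := hr.exists_walk_length_eq_edist
    rw [← hp, ← Walk.length_map f]
    exact SimpleGraph.edist_le _
  · rw [edist_eq_top_of_not_reachable hr]
    exact le_top

theorem Iso.edist_eq (e : G ≃g G') (a b : V) : G'.edist (e a) (e b) = G.edist a b := by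
  refine le_antisymm (Hom.edist_le e.toHom a b) ?_
  simpa using Hom.edist_le e.symm.toHom (e a) (e b)

theorem Iso.dist_eq (e : G ≃g G') (a b : V) : G'.dist (e a) (e b) = G.dist a b := by
  rw [dist, dist, e.edist_eq]

def Iso.supEdge (e : G ≃g G') (u v : V) : G ⊔ edge u v ≃g G' ⊔ edge (e u) (e v) where
  toEquiv := e.toEquiv
  map_rel_iff' := by
    intro a b
    simp [edge_adj, e.map_adj_iff]

theorem Walk.le_add_length_of_lipschitz {f : V → ℕ} (hf : ∀ a b, G.Adj a b → f a ≤ f b + 1)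
    {a b : V} (p : G.Walk a b) : f a ≤ f b + p.length := by
  induction p with
  | nil => simp
  | cons hadj _ ih =>
    have := hf _ _ hadj
    rw [Walk.length_cons]
    omega

theorem exists_walk_length_eq_of_descent {f : V → ℕ} {r : V} (hr : f r = 0)
    (hdesc : ∀ x, x ≠ r → ∃ y, G.Adj y x ∧ f y + 1 = f x) (x : V) :
    ∃ p : G.Walk r x, p.length = f x := by
  induction hx : f x generalizing x with
  | zero =>
    obtain rfl : x = r := by
      by_contra hne
      obtain ⟨y, -, hy⟩ := hdesc x hne
      omega
    exact ⟨.nil, rfl⟩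
  | succ n ih =>
    obtain ⟨y, hyx, hy⟩ := hdesc x (by rintro rfl; omega)
    obtain ⟨p, hp⟩ := ih y (by omega)
    exact ⟨p.concat hyx, by rw [Walk.length_concat, hp]⟩

theorem dist_eq_of_lipschitz_of_descent {f : V → ℕ} {r : V} (hr : f r = 0)
    (hf : ∀ a b, G.Adj a b → f a ≤ f b + 1)
    (hdesc : ∀ x, x ≠ r → ∃ y, G.Adj y x ∧ f y + 1 = f x) (x : V) : G.dist r x = f x := by
  obtain ⟨p, hp⟩ := exists_walk_length_eq_of_descent hr hdesc x
  obtain ⟨q, hq⟩ := p.reachable.symm.exists_walk_length_eq_dist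
  have := q.le_add_length_of_lipschitz hf
  rw [hr, hq, dist_comm] at this
  exact le_antisymm (hp ▸ dist_le p) (by omega)

end SimpleGraph

section MetricDimension

open Function

variable {V V' : Type*} {G : SimpleGraph V} {G' : SimpleGraph V'}

theorem metricDim_le_encard {W : Set V} (hW : IsResolving G W) : metricDim G ≤ W.encard :=
  sInf_le ⟨W, hW, rfl⟩

theorem le_metricDim {n : ℕ∞} (h : ∀ W, IsResolving G W → n ≤ W.encard) : n ≤ metricDim G := by
  refine le_sInf ?_
  rintro _ ⟨W, hW, rfl⟩
  exact h W hW

theorem IsResolving.image_iso (e : G ≃g G') {W : Set V} (hW : IsResolving G W) :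
    IsResolving G' (e '' W) := by
  intro x y hxy
  obtain ⟨w, hwW, hw⟩ := hW (e.symm x) (e.symm y) (by simpa using hxy)
  refine ⟨e w, Set.mem_image_of_mem e hwW, ?_⟩
  simpa [← e.dist_eq w] using hw

theorem SimpleGraph.Iso.metricDim_le (e : G ≃g G') : metricDim G' ≤ metricDim G :=
  le_metricDim fun _ hW =>
    (metricDim_le_encard (hW.image_iso e)).trans_eq (e.injective.injOn.encard_image)

theorem SimpleGraph.Iso.metricDim_eq (e : G ≃g G') : metricDim G' = metricDim G :=
  le_antisymm e.metricDim_le e.symm.metricDim_le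

theorem IsResolving.enatCard_le_encard_add_one {ι : Type*} {W : Set V} (hW : IsResolving G W)
    {t : ι → V} (ht : Injective t) {D : ι → Set V} (hD : Pairwise (Disjoint on D))
    (htwin : ∀ i j w, w ∉ D i → w ∉ D j → G.dist w (t i) = G.dist w (t j)) :
    ENat.card ι ≤ W.encard + 1 := by
  set S : Set ι := {i | ∃ w ∈ W, w ∈ D i}
  have hmiss : Sᶜ.Subsingleton := by
    intro i hi j hj
    by_contra hij
    obtain ⟨w, hwW, hw⟩ := hW (t i) (t j) (ht.ne hij)
    exact hw (htwin i j w (fun h => hi ⟨w, hwW, h⟩) (fun h => hj ⟨w, hwW, h⟩))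
  have hhit : S.encard ≤ W.encard := by
    rcases S.eq_empty_or_nonempty with hS | ⟨i₀, -⟩
    · simp [hS]
    have : Nonempty V := ⟨t i₀⟩
    have hpick : ∀ i ∈ S, ∃ w ∈ W, w ∈ D i := fun _ hi => hi
    choose! g hgW hgD using hpick
    refine Set.encard_le_encard_of_injOn (fun i hi => hgW i hi) fun i hi j hj hij => ?_
    by_contra hne
    exact Set.disjoint_left.mp (hD hne) (hgD i hi) (hij ▸ hgD j hj)
  calc ENat.card ι = (S ∪ Sᶜ).encard := by rw [Set.union_compl_self, Set.encard_univ]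
    _ ≤ S.encard + Sᶜ.encard := Set.encard_union_le _ _
    _ ≤ W.encard + 1 := add_le_add hhit (Set.encard_le_one_iff.mpr fun a b ha hb => hmiss ha hb)

end MetricDimension

namespace JumpGraph

inductive Vertex (K : ℕ) : Type
  | u | v | h
  | c (i : Fin K) | m (i : Fin K)
  | s (φ : Fin K → Fin 3) | p (φ : Fin K → Fin 3) | q (φ : Fin K → Fin 3) | t (φ : Fin K → Fin 3)
  deriving DecidableEq, Fintype

open Vertex SimpleGraph Function

variable {K : ℕ}

def Edge : Vertex K → Vertex K → Prop
  | u, h | u, c _ | u, m _ | h, s _ => True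
  | c i, m j => i = j
  | c i, s φ => φ i = 0
  | m i, s φ => φ i = 1
  | s φ, p ψ | p φ, q ψ | q φ, t ψ => φ = ψ
  | t _, v => True
  | _, _ => False

def graph (K : ℕ) : SimpleGraph (Vertex K) := fromRel Edge

lemma graph_adj {a b : Vertex K} : (graph K).Adj a b ↔ a ≠ b ∧ (Edge a b ∨ Edge b a) :=
  fromRel_adj _ _ _

def distU : Vertex K → ℕ
  | u => 0 | h | c _ | m _ => 1 | s _ => 2 | p _ => 3 | q _ => 4 | t _ => 5 | v => 6

def distC (j : Fin K) : Vertex K → ℕ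
  | u => 1 | h => 2 | v => 5
  | c i => if i = j then 0 else 2
  | m i => if i = j then 1 else 2
  | s φ => (φ j : ℕ) + 1 | p φ => (φ j : ℕ) + 2 | q φ => (φ j : ℕ) + 3 | t φ => (φ j : ℕ) + 4

def distT (φ : Fin K → Fin 3) : Vertex K → ℕ
  | u => 2 | h | c _ | m _ => 3 | v => 1
  | s ψ => if ψ = φ then 3 else 4
  | p ψ => if ψ = φ then 2 else 4
  | q ψ => if ψ = φ then 1 else 3
  | t ψ => if ψ = φ then 0 else 2

def landmarks (K : ℕ) : Set (Vertex K) := insert u (Set.range c)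

def gadget (φ : Fin K → Fin 3) : Set (Vertex K) := {s φ, p φ, q φ, t φ}

section Graph

lemma distU_lipschitz (a b : Vertex K) (hab : (graph K).Adj a b) : distU a ≤ distU b + 1 := by
  rw [graph_adj] at hab
  cases a <;> cases b <;> simp_all [Edge, distU]

lemma distU_descent (x : Vertex K) (hx : x ≠ u) :
    ∃ y, (graph K).Adj y x ∧ distU y + 1 = distU x := by
  cases x with
  | u => exact absurd rfl hx
  | h | c _ | m _ => exact ⟨u, by simp [graph_adj, Edge], rfl⟩
  | s _ => exact ⟨h, by simp [graph_adj, Edge], rfl⟩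
  | p φ => exact ⟨s φ, by simp [graph_adj, Edge], rfl⟩
  | q φ => exact ⟨p φ, by simp [graph_adj, Edge], rfl⟩
  | t φ => exact ⟨q φ, by simp [graph_adj, Edge], rfl⟩
  | v => exact ⟨t fun _ => 0, by simp [graph_adj, Edge], rfl⟩

lemma dist_u_eq (x : Vertex K) : (graph K).dist u x = distU x :=
  dist_eq_of_lipschitz_of_descent (f := distU) rfl distU_lipschitz distU_descent x

lemma distC_lipschitz (j : Fin K) (a b : Vertex K) (hab : (graph K).Adj a b) :
    distC j a ≤ distC j b + 1 := by
  rw [graph_adj] at hab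
  cases a <;> cases b <;> simp_all [Edge, distC] <;> (try split_ifs) <;> (try simp_all) <;> omega

lemma distC_descent (j : Fin K) (x : Vertex K) (hx : x ≠ c j) :
    ∃ y, (graph K).Adj y x ∧ distC j y + 1 = distC j x := by
  cases x with
  | u => exact ⟨c j, by simp [graph_adj, Edge], by simp [distC]⟩
  | h => exact ⟨u, by simp [graph_adj, Edge], rfl⟩
  | c i => exact ⟨u, by simp [graph_adj, Edge], by simp_all [distC]⟩
  | m i =>
    by_cases hij : i = j
    · exact ⟨c j, by simp [graph_adj, Edge, hij], by simp [distC, hij]⟩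
    · exact ⟨u, by simp [graph_adj, Edge], by simp [distC, hij]⟩
  | s φ =>
    obtain hφ | hφ | hφ : φ j = 0 ∨ φ j = 1 ∨ φ j = 2 := by omega
    · exact ⟨c j, by simp [graph_adj, Edge, hφ], by simp [distC, hφ]⟩
    · exact ⟨m j, by simp [graph_adj, Edge, hφ], by simp [distC, hφ]⟩
    · exact ⟨h, by simp [graph_adj, Edge], by simp [distC, hφ]⟩
  | p φ => exact ⟨s φ, by simp [graph_adj, Edge], rfl⟩
  | q φ => exact ⟨p φ, by simp [graph_adj, Edge], rfl⟩
  | t φ => exact ⟨q φ, by simp [graph_adj, Edge], rfl⟩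
  | v => exact ⟨t fun _ => 0, by simp [graph_adj, Edge], rfl⟩

lemma dist_c_eq (j : Fin K) (x : Vertex K) : (graph K).dist (c j) x = distC j x :=
  dist_eq_of_lipschitz_of_descent (f := distC j) (by simp [distC]) (distC_lipschitz j)
    (distC_descent j) x

lemma eq_of_distU_eq_of_distC_eq {x y : Vertex K} (hu : distU x = distU y)
    (hc : ∀ j, distC j x = distC j y) : x = y := by
  cases x <;> cases y <;> simp [distU] at hu ⊢
  -- on level one, `c j` sees `c i` and `m i` only for `j = i`, so the last index present decides
  all_goals first
    | (funext j; simpa [distC, Fin.ext_iff] using hc j)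
    | (rename_i i; have := hc i; simp only [distC] at this; split_ifs at this <;> simp_all)

lemma isResolving_landmarks : IsResolving (graph K) (landmarks K) := by
  intro x y hxy
  by_contra! hsame
  refine hxy (eq_of_distU_eq_of_distC_eq ?_ fun j => ?_)
  · simpa [dist_u_eq] using hsame u (Set.mem_insert _ _)
  · simpa [dist_c_eq] using hsame (c j) (Set.mem_insert_of_mem _ ⟨j, rfl⟩)

lemma encard_landmarks_le : (landmarks K).encard ≤ K + 1 := by
  calc (landmarks K).encard ≤ (Set.range (c (K := K))).encard + 1 := Set.encard_insert_le _ _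
    _ ≤ K + 1 := by
      rw [← Set.image_univ]
      grw [Set.encard_image_le, Set.encard_univ]
      simp

lemma graph_connected : (graph K).Connected :=
  (connected_iff_exists_forall_reachable _).mpr ⟨u, fun x =>
    (exists_walk_length_eq_of_descent (f := distU) rfl distU_descent x).elim
      fun p _ => p.reachable⟩

lemma not_graph_adj_u_v : ¬ (graph K).Adj u v := by
  simp [graph_adj, Edge]

theorem metricDim_graph_le (K : ℕ) : metricDim (graph K) ≤ K + 1 :=
  (metricDim_le_encard isResolving_landmarks).trans encard_landmarks_le

end Graph

section AddEdge

lemma distT_lipschitz (φ : Fin K → Fin 3) (a b : Vertex K) (hab : (graph K ⊔ edge u v).Adj a b) :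
    distT φ a ≤ distT φ b + 1 := by
  rw [sup_adj, graph_adj, edge_adj] at hab
  cases a <;> cases b <;> simp_all [Edge, distT] <;> (try split_ifs) <;> omega

lemma distT_descent (φ : Fin K → Fin 3) (x : Vertex K) (hx : x ≠ t φ) :
    ∃ y, (graph K ⊔ edge u v).Adj y x ∧ distT φ y + 1 = distT φ x := by
  cases x with
  | u => exact ⟨v, by simp [edge_adj], rfl⟩
  | h | c _ | m _ => exact ⟨u, by simp [graph_adj, Edge], rfl⟩
  | s ψ =>
    by_cases hψ : ψ = φ
    · exact ⟨p ψ, by simp [graph_adj, Edge], by simp [distT, hψ]⟩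
    · exact ⟨h, by simp [graph_adj, Edge], by simp [distT, hψ]⟩
  | p ψ => exact ⟨q ψ, by simp [graph_adj, Edge], by simp only [distT]; split_ifs <;> rfl⟩
  | q ψ => exact ⟨t ψ, by simp [graph_adj, Edge], by simp only [distT]; split_ifs <;> rfl⟩
  | t ψ => exact ⟨v, by simp [graph_adj, Edge], by simp_all [distT]⟩
  | v => exact ⟨t φ, by simp [graph_adj, Edge], by simp [distT]⟩

lemma dist_t_eq (φ : Fin K → Fin 3) (x : Vertex K) :
    (graph K ⊔ edge u v).dist (t φ) x = distT φ x :=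
  dist_eq_of_lipschitz_of_descent (f := distT φ) (by simp [distT]) (distT_lipschitz φ)
    (distT_descent φ) x

lemma distT_eq_of_notMem_gadget {φ ψ : Fin K → Fin 3} {x : Vertex K} (hφ : x ∉ gadget φ)
    (hψ : x ∉ gadget ψ) : distT φ x = distT ψ x := by
  cases x <;> simp_all [gadget, distT]

lemma pairwise_disjoint_gadget : Pairwise (Disjoint on gadget (K := K)) := by
  intro φ ψ hφψ
  simp [gadget, Set.disjoint_left, hφψ]

theorem le_metricDim_graph_sup_edge (K : ℕ) :
    ((3 ^ K - 1 : ℕ) : ℕ∞) ≤ metricDim (graph K ⊔ edge u v) := by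
  refine le_metricDim fun W hW => ?_
  have hcard := hW.enatCard_le_encard_add_one (fun _ _ => t.inj) pairwise_disjoint_gadget
    fun φ ψ x hφ hψ => by
      rw [dist_comm, dist_t_eq, dist_comm, dist_t_eq, distT_eq_of_notMem_gadget hφ hψ]
  rw [ENat.card_eq_coe_fintype_card, Fintype.card_fun, Fintype.card_fin, Fintype.card_fin] at hcard
  rw [ENat.natCast_sub]
  exact tsub_le_iff_right.mpr (mod_cast hcard)

end AddEdge

end JumpGraph

theorem add_five_mul_two_pow_le_three_pow (n : ℕ) : (n + 5) * 2 ^ (n + 2) ≤ 3 ^ (n + 3) := by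
  induction n with
  | zero => norm_num
  | succ n ih =>
    rw [pow_succ, pow_succ 3]
    nlinarith [Nat.one_le_two_pow (n := n + 2)]

/-- For every `k ≥ 4` there exist a finite connected graph `G` and a non-edge `uv`
such that `β(G) ≤ k` and `β(G + uv) ≥ (k + 1) * 2 ^ (k - 2) - 1`. -/
theorem exists_addEdge_metricDim_strong (k : ℕ) (hk : 4 ≤ k) :
    ∃ (n : ℕ) (G : SimpleGraph (Fin n)) (u v : Fin n),
      G.Connected ∧ u ≠ v ∧ ¬ G.Adj u v ∧
      metricDim G ≤ (k : ℕ∞) ∧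
      (((k + 1) * 2 ^ (k - 2) - 1 : ℕ) : ℕ∞) ≤
        metricDim (G ⊔ SimpleGraph.fromEdgeSet {s(u, v)}) := by
  obtain ⟨n, rfl⟩ : ∃ n, k = n + 4 := ⟨k - 4, by omega⟩
  let e := (Fintype.equivFin (JumpGraph.Vertex (n + 3))).symm
  let iso := SimpleGraph.Iso.comap e (JumpGraph.graph (n + 3))
  refine ⟨_, (JumpGraph.graph (n + 3)).comap e, e.symm .u, e.symm .v,
    iso.connected_iff.mpr JumpGraph.graph_connected, by simp,
    by simpa using JumpGraph.not_graph_adj_u_v, ?_, ?_⟩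
  · rw [← iso.metricDim_eq]
    exact (JumpGraph.metricDim_graph_le _).trans_eq (by push_cast; ring)
  · have hiso := (iso.supEdge (e.symm .u) (e.symm .v)).metricDim_eq
    simp only [iso, SimpleGraph.Iso.comap_apply, Equiv.apply_symm_apply] at hiso
    calc (((n + 4 + 1) * 2 ^ (n + 4 - 2) - 1 : ℕ) : ℕ∞) ≤ ((3 ^ (n + 3) - 1 : ℕ) : ℕ∞) :=
          mod_cast Nat.sub_le_sub_right (add_five_mul_two_pow_le_three_pow n) 1
      _ ≤ _ := JumpGraph.le_metricDim_graph_sup_edge _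
      _ = _ := hiso
end

section
/- Let G be a finite connected simple graph with vertex set {v_1, …, v_n}, and let H be the countably infinite graph obtained from G by adding new vertices u_1, u_2, … and the edges v_1u_1, u_1u_2, u_2u_3, …. Then β(G) ≤ β(H) ≤ β(G) + 2, where β denotes metric dimension. Concretely: (a) if W is a resolving set of G, then W ∪ {v_1, u_1} is a resolving set of H; and (b) every resolving set of H has cardinality at least β(G). -/
/-- The graph obtained from `G` by attaching an infinite ray
`v₁ u₁, u₁ u₂, u₂ u₃, …` at the vertex `v₁`; the ray vertex `uⱼ₊₁` is `Sum.inr j`. -/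
def attachRay {n : ℕ} (G : SimpleGraph (Fin n)) (v₁ : Fin n) :
    SimpleGraph (Fin n ⊕ ℕ) where
  Adj x y :=
    match x, y with
    | Sum.inl a, Sum.inl b => G.Adj a b
    | Sum.inl a, Sum.inr j => a = v₁ ∧ j = 0
    | Sum.inr j, Sum.inl a => a = v₁ ∧ j = 0
    | Sum.inr j, Sum.inr k => Nat.dist j k = 1
  symm := by
    constructor
    rintro (a | j) (b | k) h
    · exact G.adj_symm h
    · exact h
    · exact h
    · show Nat.dist k j = 1
      rw [Nat.dist_comm]
      exact h
  loopless := by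
    constructor
    rintro (a | j) h
    · exact G.irrefl h
    · simp [Nat.dist_self] at h

namespace RayAux

open SimpleGraph

variable {n : ℕ} (G : SimpleGraph (Fin n)) (v₁ : Fin n)

/-- Candidate distance function on the rayed graph. -/
noncomputable def rayDist : Fin n ⊕ ℕ → Fin n ⊕ ℕ → ℕ
  | Sum.inl a, Sum.inl b => G.dist a b
  | Sum.inl a, Sum.inr j => G.dist a v₁ + j + 1
  | Sum.inr j, Sum.inl a => G.dist a v₁ + j + 1
  | Sum.inr j, Sum.inr k => Nat.dist j k

def inlHom : G →g attachRay G v₁ := ⟨Sum.inl, fun h => h⟩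

def walkUp (j : ℕ) : (m : ℕ) → (attachRay G v₁).Walk (Sum.inr j) (Sum.inr (j + m))
  | 0 => SimpleGraph.Walk.nil
  | m + 1 => (walkUp j m).concat
      (by show Nat.dist (j + m) (j + (m + 1)) = 1; unfold Nat.dist; omega)

lemma walkUp_length (j m : ℕ) : (walkUp G v₁ j m).length = m := by
  induction m with
  | zero => rfl
  | succ m ih => simpa [walkUp, SimpleGraph.Walk.length_concat] using ih

lemma exists_walk_inr (j k : ℕ) :
    ∃ p : (attachRay G v₁).Walk (Sum.inr j) (Sum.inr k), p.length = Nat.dist j k := by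
  rcases le_total j k with h | h
  · refine ⟨(walkUp G v₁ j (k - j)).copy rfl (congrArg Sum.inr (by omega)), ?_⟩
    rw [SimpleGraph.Walk.length_copy, walkUp_length, Nat.dist_eq_sub_of_le h]
  · refine ⟨((walkUp G v₁ k (j - k)).copy rfl (congrArg Sum.inr (by omega))).reverse, ?_⟩
    rw [SimpleGraph.Walk.length_reverse, SimpleGraph.Walk.length_copy, walkUp_length,
      Nat.dist_eq_sub_of_le_right h]

lemma exists_walk (hG : G.Connected) (x y : Fin n ⊕ ℕ) :
    ∃ p : (attachRay G v₁).Walk x y, p.length = rayDist G v₁ x y := by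
  have mixed : ∀ (a : Fin n) (j : ℕ),
      ∃ p : (attachRay G v₁).Walk (Sum.inl a) (Sum.inr j),
        p.length = G.dist a v₁ + j + 1 := by
    intro a j
    obtain ⟨p, hp⟩ := hG.exists_walk_length_eq_dist a v₁
    have hadj : (attachRay G v₁).Adj (inlHom G v₁ v₁) (Sum.inr 0) :=
      (⟨rfl, rfl⟩ : v₁ = v₁ ∧ (0:ℕ) = 0)
    refine ⟨(p.map (inlHom G v₁)).append
      (SimpleGraph.Walk.cons (show (attachRay G v₁).Adj (inlHom G v₁ v₁) (Sum.inr 0) from hadj)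
        ((walkUp G v₁ 0 j).copy rfl (congrArg Sum.inr (Nat.zero_add j)))), ?_⟩
    show SimpleGraph.Walk.length (u := inlHom G v₁ a) _ = _
    simp [SimpleGraph.Walk.length_append, SimpleGraph.Walk.length_map,
      SimpleGraph.Walk.length_copy, walkUp_length, hp]
    omega
  match x, y with
  | Sum.inl a, Sum.inl b =>
    obtain ⟨p, hp⟩ := hG.exists_walk_length_eq_dist a b
    exact ⟨p.map (inlHom G v₁), (SimpleGraph.Walk.length_map _ _).trans hp⟩
  | Sum.inl a, Sum.inr j => exact mixed a j
  | Sum.inr j, Sum.inl a =>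
    obtain ⟨p, hp⟩ := mixed a j
    exact ⟨p.reverse, by simpa [SimpleGraph.Walk.length_reverse, rayDist] using hp⟩
  | Sum.inr j, Sum.inr k => exact exists_walk_inr G v₁ j k

lemma adj_dist_le {a b : Fin n} (h : G.Adj a b) : G.dist a b ≤ 1 := by
  simpa using SimpleGraph.dist_le h.toWalk

lemma rayDist_step (hG : G.Connected) {x y : Fin n ⊕ ℕ}
    (h : (attachRay G v₁).Adj x y) (z : Fin n ⊕ ℕ) :
    rayDist G v₁ x z ≤ rayDist G v₁ y z + 1 := by
  match x, y with
  | Sum.inl a, Sum.inl b =>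
    have h' : G.Adj a b := h
    have hab := adj_dist_le G h'
    match z with
    | Sum.inl c =>
      have := hG.dist_triangle (u := a) (v := b) (w := c)
      show G.dist a c ≤ G.dist b c + 1
      omega
    | Sum.inr j =>
      have := hG.dist_triangle (u := a) (v := b) (w := v₁)
      show G.dist a v₁ + j + 1 ≤ G.dist b v₁ + j + 1 + 1
      omega
  | Sum.inl a, Sum.inr k =>
    obtain ⟨ha, hk⟩ : a = v₁ ∧ k = 0 := h
    subst hk
    match z with
    | Sum.inl c =>
      show G.dist a c ≤ G.dist c v₁ + 0 + 1 + 1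
      rw [ha, SimpleGraph.dist_comm]; omega
    | Sum.inr j =>
      show G.dist a v₁ + j + 1 ≤ Nat.dist 0 j + 1
      rw [ha, SimpleGraph.dist_self, Nat.dist_zero_left]; omega
  | Sum.inr k, Sum.inl a =>
    obtain ⟨ha, hk⟩ : a = v₁ ∧ k = 0 := h
    subst hk
    match z with
    | Sum.inl c =>
      show G.dist c v₁ + 0 + 1 ≤ G.dist a c + 1
      rw [ha, SimpleGraph.dist_comm]
    | Sum.inr j =>
      show Nat.dist 0 j ≤ G.dist a v₁ + j + 1 + 1
      rw [Nat.dist_zero_left]; omega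
  | Sum.inr j, Sum.inr k =>
    have h' : Nat.dist j k = 1 := h
    match z with
    | Sum.inl c =>
      have : j ≤ k + 1 := by
        have := Nat.dist_tri_right' j k
        omega
      show G.dist c v₁ + j + 1 ≤ G.dist c v₁ + k + 1 + 1
      omega
    | Sum.inr m =>
      have := Nat.dist.triangle_inequality j k m
      show Nat.dist j m ≤ Nat.dist k m + 1
      omega

lemma rayDist_self (x : Fin n ⊕ ℕ) : rayDist G v₁ x x = 0 := by
  match x with
  | Sum.inl a => exact SimpleGraph.dist_self
  | Sum.inr j => exact Nat.dist_self j

lemma rayDist_le_length (hG : G.Connected) {x y : Fin n ⊕ ℕ}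
    (p : (attachRay G v₁).Walk x y) : rayDist G v₁ x y ≤ p.length := by
  induction p with
  | nil => simp [rayDist_self]
  | @cons u v w h p ih =>
    have := rayDist_step G v₁ hG h w
    rw [SimpleGraph.Walk.length_cons]
    omega

lemma attachRay_dist (hG : G.Connected) (x y : Fin n ⊕ ℕ) :
    (attachRay G v₁).dist x y = rayDist G v₁ x y := by
  obtain ⟨p, hp⟩ := exists_walk G v₁ hG x y
  refine le_antisymm (hp ▸ SimpleGraph.dist_le p) ?_
  obtain ⟨q, hq⟩ := (SimpleGraph.Reachable.exists_walk_length_eq_dist ⟨p⟩)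
  exact hq ▸ rayDist_le_length G v₁ hG q


variable {G} {v₁} in
lemma dist_inl_inl (hG : G.Connected) (a b : Fin n) :
    (attachRay G v₁).dist (Sum.inl a) (Sum.inl b) = G.dist a b :=
  attachRay_dist G v₁ hG _ _

variable {G} {v₁} in
lemma dist_inl_inr (hG : G.Connected) (a : Fin n) (j : ℕ) :
    (attachRay G v₁).dist (Sum.inl a) (Sum.inr j) = G.dist a v₁ + j + 1 :=
  attachRay_dist G v₁ hG _ _

variable {G} {v₁} in
lemma dist_inr_inl (hG : G.Connected) (a : Fin n) (j : ℕ) :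
    (attachRay G v₁).dist (Sum.inr j) (Sum.inl a) = G.dist a v₁ + j + 1 :=
  attachRay_dist G v₁ hG _ _

variable {G} {v₁} in
lemma dist_inr_inr (hG : G.Connected) (j k : ℕ) :
    (attachRay G v₁).dist (Sum.inr j) (Sum.inr k) = Nat.dist j k :=
  attachRay_dist G v₁ hG _ _

end RayAux

open RayAux in
/-- Let `G` be a finite connected graph and `H` the graph obtained by attaching an
infinite ray at the vertex `v₁`.  Then `β(G) ≤ β(H) ≤ β(G) + 2`.  Concretely:
(a) if `W` is a resolving set of `G` then `W ∪ {v₁, u₁}` is a resolving set of `H`;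
(b) every resolving set of `H` has cardinality at least `β(G)`. -/
theorem metricDim_attachRay {n : ℕ} (G : SimpleGraph (Fin n)) (hG : G.Connected)
    (v₁ : Fin n) :
    metricDim G ≤ metricDim (attachRay G v₁) ∧
    metricDim (attachRay G v₁) ≤ metricDim G + 2 ∧
    (∀ W : Set (Fin n), IsResolving G W →
      IsResolving (attachRay G v₁)
        ((Sum.inl '' W) ∪ {Sum.inl v₁, Sum.inr 0})) ∧
    (∀ W : Set (Fin n ⊕ ℕ), IsResolving (attachRay G v₁) W →
      metricDim G ≤ W.encard) := by
  -- part (a)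
  have ha : ∀ W : Set (Fin n), IsResolving G W →
      IsResolving (attachRay G v₁) ((Sum.inl '' W) ∪ {Sum.inl v₁, Sum.inr 0}) := by
    intro W hW x y hxy
    have hmixed : ∀ (a : Fin n) (j : ℕ),
        ∃ w ∈ (Sum.inl '' W) ∪ {Sum.inl v₁, Sum.inr 0},
          (attachRay G v₁).dist w (Sum.inl a) ≠ (attachRay G v₁).dist w (Sum.inr j) := by
      intro a j
      by_cases hd : G.dist v₁ a = j + 1
      · refine ⟨Sum.inr 0, Or.inr (Or.inr rfl), ?_⟩
        rw [dist_inr_inl hG, dist_inr_inr hG, Nat.dist_zero_left]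
        have : G.dist a v₁ = G.dist v₁ a := SimpleGraph.dist_comm
        omega
      · refine ⟨Sum.inl v₁, Or.inr (Or.inl rfl), ?_⟩
        rw [dist_inl_inl hG, dist_inl_inr hG, SimpleGraph.dist_self]
        omega
    match x, y with
    | Sum.inl a, Sum.inl b =>
      obtain ⟨w, hw, hne⟩ := hW a b (fun h => hxy (by rw [h]))
      exact ⟨Sum.inl w, Or.inl ⟨w, hw, rfl⟩, by
        rw [dist_inl_inl hG, dist_inl_inl hG]; exact hne⟩
    | Sum.inl a, Sum.inr j => exact hmixed a j
    | Sum.inr j, Sum.inl a =>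
      obtain ⟨w, hw, hne⟩ := hmixed a j
      exact ⟨w, hw, hne.symm⟩
    | Sum.inr j, Sum.inr k =>
      refine ⟨Sum.inr 0, Or.inr (Or.inr rfl), ?_⟩
      rw [dist_inr_inr hG, dist_inr_inr hG, Nat.dist_zero_left, Nat.dist_zero_left]
      exact fun h => hxy (by rw [h])
  -- part (b)
  have hb : ∀ W : Set (Fin n ⊕ ℕ), IsResolving (attachRay G v₁) W →
      metricDim G ≤ W.encard := by
    intro W hW
    set f : Fin n ⊕ ℕ → Fin n := Sum.elim id (fun _ => v₁) with hf
    have hres : IsResolving G (f '' W) := by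
      intro x y hxy
      obtain ⟨w, hw, hne⟩ := hW (Sum.inl x) (Sum.inl y) (fun h => hxy (by injection h))
      match w with
      | Sum.inl a =>
        refine ⟨a, ⟨Sum.inl a, hw, rfl⟩, ?_⟩
        rw [dist_inl_inl hG, dist_inl_inl hG] at hne
        exact hne
      | Sum.inr j =>
        refine ⟨v₁, ⟨Sum.inr j, hw, rfl⟩, ?_⟩
        rw [dist_inr_inl hG, dist_inr_inl hG] at hne
        rw [SimpleGraph.dist_comm (u := v₁) (v := x), SimpleGraph.dist_comm (u := v₁) (v := y)]
        omega
    calc metricDim G ≤ (f '' W).encard := sInf_le ⟨f '' W, hres, rfl⟩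
      _ ≤ W.encard := Set.encard_image_le f W
  refine ⟨?_, ?_, ha, hb⟩
  · exact le_sInf (by rintro b ⟨W, hW, rfl⟩; exact hb W hW)
  · -- metricDim H ≤ metricDim G + 2
    have hne : (Set.encard '' {W : Set (Fin n) | IsResolving G W}).Nonempty := by
      refine ⟨(Set.univ : Set (Fin n)).encard, Set.univ, ?_, rfl⟩
      intro x y hxy
      exact ⟨x, Set.mem_univ x, by
        rw [SimpleGraph.dist_self]
        exact fun h => (Nat.ne_of_gt (hG.pos_dist_of_ne hxy)) h.symm⟩
    obtain ⟨W₀, hW₀, hcard⟩ := csInf_mem hne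
    have hres := ha W₀ hW₀
    calc metricDim (attachRay G v₁)
        ≤ ((Sum.inl '' W₀) ∪ {Sum.inl v₁, Sum.inr 0}).encard := sInf_le ⟨_, hres, rfl⟩
      _ ≤ (Sum.inl '' W₀).encard + ({Sum.inl v₁, Sum.inr 0} : Set (Fin n ⊕ ℕ)).encard :=
          Set.encard_union_le _ _
      _ ≤ W₀.encard + 2 := by
          gcongr
          · exact Set.encard_image_le _ _
          · rw [Set.encard_pair (by simp)]
      _ = metricDim G + 2 := by rw [hcard]; rfl
end
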